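/- arXiv:1902.10560 — 7 statements merged into one kernel-verified Lean document; each statement's English description precedes it below -/
import Mathlib

section
/- Let k be a field and 𝐆 a linear algebraic group over k. If Λ ⊆ 𝐆(k) is an approximate subgroup, then there exists a Zariski-closed subgroup H of 𝐆(k), an element g ∈ 𝐆(k), and a finite subset F ⊆ 𝐆(k) such that gH is contained in the Zariski closure of Λ, and the Zariski closure of Λ is contained in FH ∩ HF. -/
open Pointwise MvPolynomial

/-- An approximate subgroup: a symmetric subset containing the identity such that
`Λ² ⊆ F₀Λ` for some finite `F₀`. -/
def IsApproxSubgroup {G : Type*} [Group G] (Λ : Set G) : Prop :=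
  Λ⁻¹ = Λ ∧ (1 : G) ∈ Λ ∧ ∃ F₀ : Set G, F₀.Finite ∧ Λ * Λ ⊆ F₀ * Λ

/-- The Zariski topology on affine space `σ → k`. -/
def zariskiAffine (k : Type*) [CommRing k] (σ : Type*) : TopologicalSpace (σ → k) :=
  TopologicalSpace.generateFrom
    {U | ∃ p : MvPolynomial σ k, U = {x | eval x p ≠ 0}}

/-- The Zariski topology on the `k`-points of a linear algebraic group realized inside
affine `N`-space via an embedding `ι`. -/
def algGroupTop {k : Type*} [CommRing k] {N : ℕ} {G : Type*} (ι : G → (Fin N → k)) :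
    TopologicalSpace G :=
  TopologicalSpace.induced ι (zariskiAffine k (Fin N))

section NoetherianAux

open TopologicalSpace

open TopologicalSpace

private lemma noetherian_induced {α β : Type*} [tβ : TopologicalSpace β]
    [NoetherianSpace β] (f : α → β) :
    @NoetherianSpace α (tβ.induced f) := by
  letI := tβ.induced f
  rw [noetherianSpace_iff_isCompact]
  intro s
  refine isCompact_of_finite_subcover fun {ιt} U hU hsU => ?_
  choose V hV hUV using fun i => (isOpen_induced_iff.mp (hU i))
  have hc : f '' s ⊆ ⋃ i, V i := by
    rintro y ⟨x, hx, rfl⟩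
    obtain ⟨i, hi⟩ := Set.mem_iUnion.mp (hsU hx)
    refine Set.mem_iUnion.mpr ⟨i, ?_⟩
    rw [← hUV i] at hi; exact hi
  obtain ⟨t, ht⟩ := (NoetherianSpace.isCompact (f '' s)).elim_finite_subcover V hV hc
  refine ⟨t, fun x hx => ?_⟩
  obtain ⟨i, hit, hi⟩ := Set.mem_iUnion₂.mp (ht ⟨x, hx, rfl⟩)
  exact Set.mem_iUnion₂.mpr ⟨i, hit, by rw [← hUV i]; exact hi⟩

private lemma zariskiAffineAux_eq (k : Type*) [Field k] (N : ℕ) :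
    TopologicalSpace.generateFrom
      {U | ∃ p : MvPolynomial (Fin N) k, U = {x | eval x p ≠ 0}} =
      TopologicalSpace.induced
        (fun x : Fin N → k =>
          (⟨RingHom.ker (eval x), RingHom.ker_isPrime (eval x)⟩ :
            PrimeSpectrum (MvPolynomial (Fin N) k)))
        inferInstance := by
  have h1 : (inferInstance : TopologicalSpace (PrimeSpectrum (MvPolynomial (Fin N) k))) =
      TopologicalSpace.generateFrom
        (Set.range fun r : MvPolynomial (Fin N) k =>
          (PrimeSpectrum.basicOpen r : Set (PrimeSpectrum (MvPolynomial (Fin N) k)))) :=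
    PrimeSpectrum.isTopologicalBasis_basic_opens.eq_generateFrom
  rw [h1, induced_generateFrom_eq]
  congr 1
  ext U
  simp only [Set.image, Set.mem_range, Set.mem_setOf_eq]
  constructor
  · rintro ⟨p, rfl⟩
    refine ⟨(PrimeSpectrum.basicOpen p : Set (PrimeSpectrum (MvPolynomial (Fin N) k))),
      ⟨p, rfl⟩, ?_⟩
    ext x
    simp [RingHom.mem_ker, PrimeSpectrum.mem_basicOpen]
  · rintro ⟨V, ⟨p, rfl⟩, rfl⟩
    refine ⟨p, ?_⟩
    ext x
    simp [RingHom.mem_ker, PrimeSpectrum.mem_basicOpen]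


end NoetherianAux

private lemma aeval_eq_eval' {k : Type*} [CommSemiring k] {σ : Type*} (w : σ → k)
    (p : MvPolynomial σ k) : aeval w p = eval w p := by
  rw [← coe_aeval_eq_eval]; rfl

private lemma eval_bind₁' {k : Type*} [CommSemiring k] {σ τ : Type*} (v : τ → k)
    (g : σ → MvPolynomial τ k) (φ : MvPolynomial σ k) :
    eval v (bind₁ g φ) = eval (fun s => eval v (g s)) φ := by
  exact eval₂Hom_bind₁ (RingHom.id k) v g φ

private lemma continuous_of_polynomial {k : Type*} [Field k] {N : ℕ} {G : Type*}
    (ι : G → (Fin N → k)) (φ : G → G) (P : Fin N → MvPolynomial (Fin N) k)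
    (hP : ∀ x i, ι (φ x) i = eval (ι x) (P i)) :
    @Continuous G G (algGroupTop ι) (algGroupTop ι) φ := by
  letI tA : TopologicalSpace (Fin N → k) := zariskiAffine k (Fin N)
  letI tG : TopologicalSpace G := algGroupTop ι
  have hψ : Continuous (fun v : Fin N → k => (fun i => eval v (P i) : Fin N → k)) := by
    apply continuous_generateFrom_iff.mpr
    rintro U ⟨p, rfl⟩
    have heq : (fun v : Fin N → k => (fun i => eval v (P i) : Fin N → k)) ⁻¹'
        {x | eval x p ≠ 0} = {v | eval v (bind₁ P p) ≠ 0} := by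
      ext v
      simp [eval_bind₁']
    rw [heq]
    exact TopologicalSpace.isOpen_generateFrom_of_mem ⟨bind₁ P p, rfl⟩
  apply continuous_induced_rng.mpr
  have hcomp : (ι ∘ φ) = (fun v : Fin N → k => (fun i => eval v (P i) : Fin N → k)) ∘ ι := by
    funext x
    funext i
    exact hP x i
  rw [hcomp]
  exact hψ.comp continuous_induced_dom


section SetAlg
variable {G : Type*} [Group G]
private def Lset (a : G) (s : Set G) : Set G := (fun x => a * x) '' s
private def Rset (a : G) (s : Set G) : Set G := (fun x => x * a) '' s
private def Tset (g h : G) (s : Set G) : Set G := (fun x => g * x * h) '' s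
private lemma Lset_comp (a b : G) (s : Set G) : Lset a (Lset b s) = Lset (a * b) s := by
  simp only [Lset, Set.image_image, mul_assoc]
private lemma Rset_comp (a b : G) (s : Set G) : Rset a (Rset b s) = Rset (b * a) s := by
  simp only [Rset, Set.image_image, mul_assoc]
private lemma Lset_one (s : Set G) : Lset 1 s = s := by simp [Lset]
private lemma Rset_one (s : Set G) : Rset 1 s = s := by simp [Rset]
private lemma Lset_eq_Tset (a : G) (s : Set G) : Lset a s = Tset a 1 s := by
  simp [Lset, Tset]
private lemma Rset_eq_Tset (a : G) (s : Set G) : Rset a s = Tset 1 a s := by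
  simp [Rset, Tset]
private lemma Tset_comp (g h g' h' : G) (s : Set G) :
    Tset g h (Tset g' h' s) = Tset (g * g') (h' * h) s := by
  simp only [Tset, Set.image_image]
  apply congrFun; apply congrArg; funext x; group
private lemma Tset_one (s : Set G) : Tset 1 1 s = s := by simp [Tset]
private lemma Tset_cancel (g h : G) (s : Set G) : Tset g⁻¹ h⁻¹ (Tset g h s) = s := by
  rw [Tset_comp]; simp [Tset]
private lemma Tset_subset_iff (g h : G) {s t : Set G} :
    Tset g h s ⊆ Tset g h t ↔ s ⊆ t := by
  constructor
  · intro hsub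
    have := Set.image_mono (f := fun x : G => g⁻¹ * x * h⁻¹) hsub
    rw [show ((fun x : G => g⁻¹ * x * h⁻¹) '' Tset g h s) = Tset g⁻¹ h⁻¹ (Tset g h s) from rfl,
      show ((fun x : G => g⁻¹ * x * h⁻¹) '' Tset g h t) = Tset g⁻¹ h⁻¹ (Tset g h t) from rfl,
      Tset_cancel, Tset_cancel] at this
    exact this
  · exact fun hsub => Set.image_mono hsub
private lemma Tset_ssubset (g h : G) {s t : Set G} (hst : s ⊂ t) :
    Tset g h s ⊂ Tset g h t :=
  ⟨(Tset_subset_iff g h).mpr hst.subset,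
    fun hc => hst.not_subset ((Tset_subset_iff g h).mp hc)⟩
end SetAlg

section Topo
variable {G : Type*} [Group G] [TopologicalSpace G]
private def homeoT (hl : ∀ a : G, Continuous fun x => a * x)
    (hr : ∀ a : G, Continuous fun x => x * a) (g h : G) : G ≃ₜ G where
  toFun := fun x => g * x * h
  invFun := fun x => g⁻¹ * x * h⁻¹
  left_inv := fun x => by group
  right_inv := fun x => by group
  continuous_toFun := (hr h).comp (hl g)
  continuous_invFun := (hr h⁻¹).comp (hl g⁻¹)
private lemma Tset_isClosed (hl : ∀ a : G, Continuous fun x => a * x)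
    (hr : ∀ a : G, Continuous fun x => x * a) (g h : G) {s : Set G}
    (hs : IsClosed s) : IsClosed (Tset g h s) :=
  (Homeomorph.isClosedMap (homeoT hl hr g h)) s hs
private lemma Tset_image_closure (hl : ∀ a : G, Continuous fun x => a * x)
    (hr : ∀ a : G, Continuous fun x => x * a) (g h : G) (s : Set G) :
    Tset g h (closure s) = closure (Tset g h s) :=
  Homeomorph.image_closure (homeoT hl hr g h) s
private lemma Tset_irreducible (hl : ∀ a : G, Continuous fun x => a * x)
    (hr : ∀ a : G, Continuous fun x => x * a) (g h : G) {s : Set G}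
    (hs : IsIrreducible s) : IsIrreducible (Tset g h s) :=
  hs.image _ (((hr h).comp (hl g)).continuousOn)

open TopologicalSpace in
private lemma no_descending {α : Type*} [TopologicalSpace α] [NoetherianSpace α]
    (f : ℕ → Set α) (hcl : ∀ n, IsClosed (f n)) (hlt : ∀ n, f (n + 1) ⊂ f n) : False := by
  have wf : WellFounded ((· < ·) : Closeds α → Closeds α → Prop) := wellFounded_lt
  set seq : ℕ → Closeds α := fun n => ⟨f n, hcl n⟩ with hseq
  have hltseq : ∀ n, seq (n + 1) < seq n := by
    intro n
    refine lt_of_le_of_ne (hlt n).subset ?_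
    intro hc
    exact (hlt n).ne (congrArg (fun c : Closeds α => (c : Set α)) hc)
  have hne : (Set.range seq).Nonempty := ⟨seq 0, ⟨0, rfl⟩⟩
  obtain ⟨n, hn⟩ := wf.min_mem (Set.range seq) hne
  exact wf.not_lt_min (Set.range seq) ⟨n + 1, rfl⟩ (hn ▸ hltseq n)

private lemma irr_subset_of_subset_sUnion {α : Type*} [TopologicalSpace α]
    {s : Set α} (hs : IsIrreducible s) :
    ∀ {F : Set (Set α)}, F.Finite → (∀ A ∈ F, IsClosed A) → s ⊆ ⋃₀ F →
      ∃ A ∈ F, s ⊆ A := by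
  intro F hF
  refine Set.Finite.induction_on
    (motive := fun F _ => (∀ A ∈ F, IsClosed A) → s ⊆ ⋃₀ F → ∃ A ∈ F, s ⊆ A) F hF ?_ ?_
  · intro _ hsub
    obtain ⟨x, hx⟩ := hs.nonempty
    simpa using hsub hx
  · intro A F' hA hF' ih hcl hsub
    by_cases hsA : s ⊆ A
    · exact ⟨A, Set.mem_insert _ _, hsA⟩
    have hB : IsClosed (⋃₀ F') := by
      rw [Set.sUnion_eq_biUnion]
      exact Set.Finite.isClosed_biUnion hF' fun A' hA' => hcl A' (Set.mem_insert_of_mem _ hA')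
    have hsB : s ⊆ ⋃₀ F' := by
      by_contra hsB
      obtain ⟨x, hxs, hxA⟩ := Set.not_subset.mp hsA
      obtain ⟨y, hys, hyB⟩ := Set.not_subset.mp hsB
      obtain ⟨z, hzs, hzA, hzB⟩ := hs.2 Aᶜ (⋃₀ F')ᶜ
        (hcl A (Set.mem_insert _ _)).isOpen_compl hB.isOpen_compl
        ⟨x, hxs, hxA⟩ ⟨y, hys, hyB⟩
      obtain ⟨W, hW, hzW⟩ := hsub hzs
      rcases hW with rfl | hW
      · exact hzA hzW
      · exact hzB ⟨W, hW, hzW⟩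
    obtain ⟨A', hA', hsA'⟩ := ih (fun A' hA' => hcl A' (Set.mem_insert_of_mem _ hA')) hsB
    exact ⟨A', Set.mem_insert_of_mem _ hA', hsA'⟩
end Topo

open TopologicalSpace in
private theorem main_abstract {G : Type*} [Group G] [TopologicalSpace G]
    [NoetherianSpace G]
    (hl : ∀ a : G, Continuous fun x => a * x)
    (hr : ∀ a : G, Continuous fun x => x * a)
    (hi : Continuous fun x : G => x⁻¹)
    (Λ : Set G) (hΛ : IsApproxSubgroup Λ) :
    ∃ (H : Subgroup G) (g : G) (F : Set G), F.Finite ∧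
      IsClosed (H : Set G) ∧
      g • (H : Set G) ⊆ closure Λ ∧
      closure Λ ⊆ (F * (H : Set G)) ∩ ((H : Set G) * F) := by
  classical
  obtain ⟨hsymm, hone, F₀, hF₀fin, hF₀⟩ := hΛ
  haveI : Nonempty G := ⟨1⟩
  set X := closure Λ with hXdef
  have hXcl : IsClosed X := isClosed_closure
  have hXone : (1 : G) ∈ X := subset_closure hone
  -- X is symmetric
  have hinv_closure : ∀ s : Set G, (closure s)⁻¹ = closure s⁻¹ := by
    intro s
    have hIH : (fun x : G => x⁻¹) '' closure s = closure
        ((fun x : G => x⁻¹) '' s) :=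
      Homeomorph.image_closure (Homeomorph.mk (Equiv.inv G) hi hi) s
    simpa [Set.image_inv_eq_inv] using hIH
  have hXsymm : X⁻¹ = X := by
    rw [hXdef, hinv_closure, hsymm]
  have hmemX : ∀ a ∈ X, a⁻¹ ∈ X := by
    intro a ha
    rw [← hXsymm]
    exact Set.inv_mem_inv.mpr ha
  -- multiplication bounds for closures
  have hLclos : ∀ a (s : Set G), Lset a (closure s) = closure (Lset a s) := by
    intro a s
    rw [Lset_eq_Tset, Lset_eq_Tset]
    exact Tset_image_closure hl hr a 1 s
  have hRclos : ∀ a (s : Set G), Rset a (closure s) = closure (Rset a s) := by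
    intro a s
    rw [Rset_eq_Tset, Rset_eq_Tset]
    exact Tset_image_closure hl hr 1 a s
  have hmul_biUnionL : ∀ s t : Set G, s * t = ⋃ a ∈ s, Lset a t := by
    intro s t; ext x
    simp only [Set.mem_mul, Set.mem_iUnion, Lset, Set.mem_image]
    constructor
    · rintro ⟨a, ha, b, hb, rfl⟩; exact ⟨a, ha, b, hb, rfl⟩
    · rintro ⟨a, ha, b, hb, rfl⟩; exact ⟨a, ha, b, hb, rfl⟩
  have hmul_biUnionR : ∀ s t : Set G, s * t = ⋃ b ∈ t, Rset b s := by
    intro s t; ext x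
    simp only [Set.mem_mul, Set.mem_iUnion, Rset, Set.mem_image]
    constructor
    · rintro ⟨a, ha, b, hb, rfl⟩; exact ⟨b, hb, a, ha, rfl⟩
    · rintro ⟨b, hb, a, ha, rfl⟩; exact ⟨a, ha, b, hb, rfl⟩
  have hF₀Xcl : IsClosed (F₀ * X) := by
    rw [hmul_biUnionL]
    exact Set.Finite.isClosed_biUnion hF₀fin fun f _ => by
      rw [Lset_eq_Tset]; exact Tset_isClosed hl hr f 1 hXcl
  have step1 : ∀ a ∈ Λ, Lset a X ⊆ F₀ * X := by
    intro a ha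
    have h1 : Lset a Λ ⊆ F₀ * X := by
      rintro _ ⟨b, hb, rfl⟩
      exact Set.mul_subset_mul_left subset_closure (hF₀ (Set.mul_mem_mul ha hb))
    rw [hXdef, hLclos]
    exact closure_minimal h1 hF₀Xcl
  have hXXl : X * X ⊆ F₀ * X := by
    rw [hmul_biUnionR X X]
    refine Set.iUnion₂_subset fun x hx => ?_
    have h1 : Rset x Λ ⊆ F₀ * X := by
      rintro _ ⟨a, ha, rfl⟩
      exact step1 a ha ⟨x, hx, rfl⟩
    rw [hXdef, hRclos]
    exact closure_minimal h1 hF₀Xcl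
  have hXXr : X * X ⊆ X * F₀⁻¹ := by
    have h0 : X * X = (X * X)⁻¹ := by rw [mul_inv_rev, hXsymm]
    have h1 : (X * X)⁻¹ ⊆ (F₀ * X)⁻¹ := Set.inv_subset_inv.mpr hXXl
    have h2 : (F₀ * X)⁻¹ = X * F₀⁻¹ := by rw [mul_inv_rev, hXsymm]
    rw [h0, ← h2]
    exact h1
  -- irreducible components
  obtain ⟨S, hSfin, hScl, hSirr, hSU⟩ :=
    NoetherianSpace.exists_finite_set_isClosed_irreducible hXcl
  -- the poset of two-sided translates of components
  set P : Set G → Prop := fun D => ∃ g h C, C ∈ S ∧ D = Tset g h C with hPdef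
  set M : Set G → Prop := fun D => P D ∧ ∀ E, P E → D ⊆ E → D = E with hMdef
  have hPtrans : ∀ (g h : G) (D : Set G), P D → P (Tset g h D) := by
    rintro g h D ⟨g', h', C, hC, rfl⟩
    exact ⟨g * g', h' * h, C, hC, Tset_comp g h g' h' C⟩
  have key : ∀ (C : Set G), IsClosed C → ∀ g h, C ⊆ Tset g h C → C = Tset g h C := by
    intro C hC g h hsub
    by_contra hne
    have hss : C ⊂ Tset g h C := ssubset_of_subset_of_ne hsub hne
    have hlt0 : Tset g⁻¹ h⁻¹ C ⊂ C := by
      have := Tset_ssubset g⁻¹ h⁻¹ hss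
      rwa [Tset_cancel] at this
    refine no_descending (fun n => (fun s => Tset g⁻¹ h⁻¹ s)^[n] C) ?_ ?_
    · intro n
      induction n with
      | zero => exact hC
      | succ n ih =>
        show IsClosed ((fun s => Tset g⁻¹ h⁻¹ s)^[n + 1] C)
        rw [Function.iterate_succ_apply']
        exact Tset_isClosed hl hr _ _ ih
    · have hmono : ∀ (n : ℕ) (s t : Set G), s ⊂ t →
          (fun s => Tset g⁻¹ h⁻¹ s)^[n] s ⊂ (fun s => Tset g⁻¹ h⁻¹ s)^[n] t := by
        intro n
        induction n with
        | zero => intro s t hst; simpa using hst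
        | succ n ih =>
          intro s t hst
          rw [Function.iterate_succ_apply, Function.iterate_succ_apply]
          exact ih _ _ (Tset_ssubset _ _ hst)
      intro n
      show (fun s => Tset g⁻¹ h⁻¹ s)^[n + 1] C ⊂ (fun s => Tset g⁻¹ h⁻¹ s)^[n] C
      rw [Function.iterate_succ_apply]
      exact hmono n _ _ hlt0
  have hMtrans : ∀ (g h : G) (D : Set G), M D → M (Tset g h D) := by
    rintro g h D ⟨hPD, hmax⟩
    refine ⟨hPtrans g h D hPD, ?_⟩
    intro E hPE hsub
    have h1 : D ⊆ Tset g⁻¹ h⁻¹ E := by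
      have := (Tset_subset_iff g⁻¹ h⁻¹ (s := Tset g h D) (t := E)).mpr hsub
      rwa [Tset_cancel] at this
    have h2 : D = Tset g⁻¹ h⁻¹ E := hmax _ (hPtrans g⁻¹ h⁻¹ E hPE) h1
    rw [h2, Tset_comp]
    simp [Tset_one]
  have no_strict : ∀ (C : Set G), C ∈ S → ∀ g h g' h',
      ¬ (Tset g h C ⊂ Tset g' h' C) := by
    intro C hC g h g' h' hss
    have h1 := Tset_ssubset g⁻¹ h⁻¹ hss
    rw [Tset_cancel, Tset_comp] at h1
    exact h1.ne (key C (hScl C hC) _ _ h1.subset)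
  -- existence of maximal elements
  have exists_max : ∀ D, P D → ∃ E, M E ∧ D ⊆ E := by
    have main : ∀ (n : ℕ) (D : Set G), P D →
        {C | C ∈ S ∧ ∃ g h, D ⊂ Tset g h C}.ncard ≤ n → ∃ E, M E ∧ D ⊆ E := by
      intro n
      induction n with
      | zero =>
        intro D hD hcard
        refine ⟨D, ⟨hD, ?_⟩, subset_rfl⟩
        intro E hE hDE
        by_contra hne
        have hss : D ⊂ E := ssubset_of_subset_of_ne hDE hne
        obtain ⟨g, h, C, hC, rfl⟩ := hE
        have hmem : C ∈ {C | C ∈ S ∧ ∃ g h, D ⊂ Tset g h C} := ⟨hC, g, h, hss⟩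
        have hfin : {C | C ∈ S ∧ ∃ g h, D ⊂ Tset g h C}.Finite :=
          hSfin.subset fun C hC => hC.1
        have : {C | C ∈ S ∧ ∃ g h, D ⊂ Tset g h C} = ∅ :=
          (Set.ncard_eq_zero hfin).mp (Nat.le_zero.mp hcard)
        rw [this] at hmem
        exact hmem
      | succ n ih =>
        intro D hD hcard
        by_cases hmax : ∀ E, P E → D ⊆ E → D = E
        · exact ⟨D, ⟨hD, hmax⟩, subset_rfl⟩
        · push_neg at hmax
          obtain ⟨E, hPE, hDE, hne⟩ := hmax
          have hss : D ⊂ E := ssubset_of_subset_of_ne hDE hne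
          obtain ⟨g, h, C, hC, rfl⟩ := hPE
          have hsubset : {C' | C' ∈ S ∧ ∃ g' h', Tset g h C ⊂ Tset g' h' C'} ⊆
              {C' | C' ∈ S ∧ ∃ g' h', D ⊂ Tset g' h' C'} := by
            rintro C' ⟨hC', g', h', hlt⟩
            exact ⟨hC', g', h', hss.trans hlt⟩
          have hCin : C ∈ {C' | C' ∈ S ∧ ∃ g' h', D ⊂ Tset g' h' C'} := ⟨hC, g, h, hss⟩
          have hCout : C ∉ {C' | C' ∈ S ∧ ∃ g' h', Tset g h C ⊂ Tset g' h' C'} := by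
            rintro ⟨_, g', h', hlt⟩
            exact no_strict C hC g h g' h' hlt
          have hssu : {C' | C' ∈ S ∧ ∃ g' h', Tset g h C ⊂ Tset g' h' C'} ⊂
              {C' | C' ∈ S ∧ ∃ g' h', D ⊂ Tset g' h' C'} :=
            ⟨hsubset, fun hcon => hCout (hcon hCin)⟩
          have hfinD : {C' | C' ∈ S ∧ ∃ g' h', D ⊂ Tset g' h' C'}.Finite :=
            hSfin.subset fun C hC => hC.1
          have hlt : {C' | C' ∈ S ∧ ∃ g' h', Tset g h C ⊂ Tset g' h' C'}.ncard <
              {C' | C' ∈ S ∧ ∃ g' h', D ⊂ Tset g' h' C'}.ncard :=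
            Set.ncard_lt_ncard hssu hfinD
          obtain ⟨E', hME', hsubE'⟩ := ih (Tset g h C) ⟨g, h, C, hC, rfl⟩ (by omega)
          exact ⟨E', hME', hss.subset.trans hsubE'⟩
    intro D hD
    exact main _ D hD le_rfl
  -- maximal components
  set MC : Set (Set G) := {D | D ∈ S ∧ M D} with hMCdef
  set U : Set G := ⋃₀ MC with hUdef
  have hMCfin : MC.Finite := hSfin.subset fun D hD => hD.1
  have hUcl : IsClosed U := by
    rw [hUdef, Set.sUnion_eq_biUnion]
    exact Set.Finite.isClosed_biUnion hMCfin fun D hD => hScl D hD.1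
  have hUsubX : U ⊆ X := by
    rintro x ⟨D, hD, hx⟩
    rw [hSU]
    exact ⟨D, hD.1, hx⟩
  have hUne : U.Nonempty := by
    have hx : (1 : G) ∈ ⋃₀ S := by rw [← hSU]; exact hXone
    obtain ⟨C₀, hC₀, _⟩ := hx
    obtain ⟨E, hME, _⟩ := exists_max C₀ ⟨1, 1, C₀, hC₀, (Tset_one C₀).symm⟩
    obtain ⟨g, h, C', hC', rfl⟩ := hME.1
    have hMC' : M C' := by
      have := hMtrans g⁻¹ h⁻¹ _ hME
      rwa [Tset_cancel] at this
    obtain ⟨x, hx⟩ := (hSirr C' hC').nonempty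
    exact ⟨x, C', ⟨hC', hMC'⟩, hx⟩
  have hDsubX : ∀ D ∈ MC, D ⊆ X := by
    intro D hD
    rw [hSU]
    exact Set.subset_sUnion_of_mem hD.1
  -- families of translates of components
  set FamL : Set (Set G) := (fun p : G × Set G => Lset p.1 p.2) '' (F₀ ×ˢ S) with hFamLdef
  set FamR : Set (Set G) := (fun p : G × Set G => Rset p.1 p.2) '' (F₀⁻¹ ×ˢ S) with hFamRdef
  have hFamLfin : FamL.Finite := (hF₀fin.prod hSfin).image _
  have hFamRfin : FamR.Finite := (hF₀fin.inv.prod hSfin).image _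
  have hFamLcl : ∀ A ∈ FamL, IsClosed A := by
    rintro _ ⟨⟨f, C⟩, ⟨hf, hC⟩, rfl⟩
    show IsClosed (Lset f C)
    rw [Lset_eq_Tset]
    exact Tset_isClosed hl hr _ _ (hScl C hC)
  have hFamRcl : ∀ A ∈ FamR, IsClosed A := by
    rintro _ ⟨⟨f, C⟩, ⟨hf, hC⟩, rfl⟩
    show IsClosed (Rset f C)
    rw [Rset_eq_Tset]
    exact Tset_isClosed hl hr _ _ (hScl C hC)
  have hFamLU : F₀ * X ⊆ ⋃₀ FamL := by
    intro x hx
    obtain ⟨f, hf, y, hy, rfl⟩ := hx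
    rw [hSU] at hy
    obtain ⟨C, hC, hyC⟩ := hy
    exact ⟨Lset f C, ⟨(f, C), ⟨hf, hC⟩, rfl⟩, ⟨y, hyC, rfl⟩⟩
  have hFamRU : X * F₀⁻¹ ⊆ ⋃₀ FamR := by
    intro x hx
    obtain ⟨y, hy, f, hf, rfl⟩ := hx
    rw [hSU] at hy
    obtain ⟨C, hC, hyC⟩ := hy
    exact ⟨Rset f C, ⟨(f, C), ⟨hf, hC⟩, rfl⟩, ⟨y, hyC, rfl⟩⟩
  -- the key translation property of maximal components
  have hP1L : ∀ a ∈ X, ∀ D ∈ MC, ∃ f ∈ F₀, ∃ D' ∈ MC, Lset a D = Lset f D' := by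
    intro a ha D hD
    have hirr : IsIrreducible (Lset a D) := by
      rw [Lset_eq_Tset]
      exact Tset_irreducible hl hr _ _ (hSirr D hD.1)
    have hsub : Lset a D ⊆ ⋃₀ FamL := by
      rintro _ ⟨b, hb, rfl⟩
      exact hFamLU (hXXl (Set.mul_mem_mul ha (hDsubX D hD hb)))
    obtain ⟨A, hA, hsubA⟩ := irr_subset_of_subset_sUnion hirr hFamLfin hFamLcl hsub
    obtain ⟨⟨f, C'⟩, ⟨hf, hC'⟩, rfl⟩ := hA
    have hMaD : M (Lset a D) := by
      rw [Lset_eq_Tset]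
      exact hMtrans a 1 D hD.2
    have hPA : P (Lset f C') := ⟨f, 1, C', hC', Lset_eq_Tset f C'⟩
    have heq : Lset a D = Lset f C' := hMaD.2 _ hPA hsubA
    have hMfC' : M (Lset f C') := heq ▸ hMaD
    have hMC' : M C' := by
      have h1 := hMtrans f⁻¹ (1 : G)⁻¹ _ hMfC'
      rw [Lset_eq_Tset, Tset_cancel] at h1
      exact h1
    exact ⟨f, hf, C', ⟨hC', hMC'⟩, heq⟩
  have hP1R : ∀ a ∈ X, ∀ D ∈ MC, ∃ f ∈ F₀⁻¹, ∃ D' ∈ MC, Rset a D = Rset f D' := by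
    intro a ha D hD
    have hirr : IsIrreducible (Rset a D) := by
      rw [Rset_eq_Tset]
      exact Tset_irreducible hl hr _ _ (hSirr D hD.1)
    have hsub : Rset a D ⊆ ⋃₀ FamR := by
      rintro _ ⟨b, hb, rfl⟩
      exact hFamRU (hXXr (Set.mul_mem_mul (hDsubX D hD hb) ha))
    obtain ⟨A, hA, hsubA⟩ := irr_subset_of_subset_sUnion hirr hFamRfin hFamRcl hsub
    obtain ⟨⟨f, C'⟩, ⟨hf, hC'⟩, rfl⟩ := hA
    have hMaD : M (Rset a D) := by
      rw [Rset_eq_Tset]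
      exact hMtrans 1 a D hD.2
    have hPA : P (Rset f C') := ⟨1, f, C', hC', Rset_eq_Tset f C'⟩
    have heq : Rset a D = Rset f C' := hMaD.2 _ hPA hsubA
    have hMfC' : M (Rset f C') := heq ▸ hMaD
    have hMC' : M C' := by
      have h1 := hMtrans (1 : G)⁻¹ f⁻¹ _ hMfC'
      rw [Rset_eq_Tset, Tset_cancel] at h1
      exact h1
    exact ⟨f, hf, C', ⟨hC', hMC'⟩, heq⟩
  -- finiteness of the possible translates of U
  set ΦL : Set (Set G) := (fun p : G × Set G => Lset p.1 p.2) '' (F₀ ×ˢ MC) with hΦLdef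
  set ΦR : Set (Set G) := (fun p : G × Set G => Rset p.1 p.2) '' (F₀⁻¹ ×ˢ MC) with hΦRdef
  have hΦLfin : ΦL.Finite := (hF₀fin.prod hMCfin).image _
  have hΦRfin : ΦR.Finite := (hF₀fin.inv.prod hMCfin).image _
  have hP2L : ∀ a ∈ X, Lset a U = ⋃₀ {t | t ∈ ΦL ∧ t ⊆ Lset a U} := by
    intro a ha
    apply Set.Subset.antisymm
    · rintro _ ⟨u, hu, rfl⟩
      obtain ⟨D, hD, huD⟩ := hu
      obtain ⟨f, hf, D', hD', heq⟩ := hP1L a ha D hD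
      refine ⟨Lset f D', ⟨⟨(f, D'), ⟨hf, hD'⟩, rfl⟩, ?_⟩, ?_⟩
      · rw [← heq]
        exact Set.image_mono (Set.subset_sUnion_of_mem hD)
      · rw [← heq]
        exact ⟨u, huD, rfl⟩
    · rintro x ⟨t, ⟨_, hsubt⟩, hxt⟩
      exact hsubt hxt
  have hP2R : ∀ a ∈ X, Rset a U = ⋃₀ {t | t ∈ ΦR ∧ t ⊆ Rset a U} := by
    intro a ha
    apply Set.Subset.antisymm
    · rintro _ ⟨u, hu, rfl⟩
      obtain ⟨D, hD, huD⟩ := hu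
      obtain ⟨f, hf, D', hD', heq⟩ := hP1R a ha D hD
      refine ⟨Rset f D', ⟨⟨(f, D'), ⟨hf, hD'⟩, rfl⟩, ?_⟩, ?_⟩
      · rw [← heq]
        exact Set.image_mono (Set.subset_sUnion_of_mem hD)
      · rw [← heq]
        exact ⟨u, huD, rfl⟩
    · rintro x ⟨t, ⟨_, hsubt⟩, hxt⟩
      exact hsubt hxt
  have hLval : ∀ a ∈ X, Lset a U ∈ Set.sUnion '' {t : Set (Set G) | t ⊆ ΦL} := by
    intro a ha
    exact ⟨{t | t ∈ ΦL ∧ t ⊆ Lset a U}, fun s hs => hs.1, (hP2L a ha).symm⟩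
  have hRval : ∀ a ∈ X, Rset a U ∈ Set.sUnion '' {t : Set (Set G) | t ⊆ ΦR} := by
    intro a ha
    exact ⟨{t | t ∈ ΦR ∧ t ⊆ Rset a U}, fun s hs => hs.1, (hP2R a ha).symm⟩
  -- the invariant
  set ξ : G → Set G × Set G × Set G × Set G :=
    fun a => (Lset a U, Lset a⁻¹ U, Rset a U, Rset a⁻¹ U) with hξdef
  have hξfin : (ξ '' X).Finite := by
    have hfinL : (Set.sUnion '' {t : Set (Set G) | t ⊆ ΦL}).Finite :=
      hΦLfin.finite_subsets.image _
    have hfinR : (Set.sUnion '' {t : Set (Set G) | t ⊆ ΦR}).Finite :=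
      hΦRfin.finite_subsets.image _
    apply (hfinL.prod (hfinL.prod (hfinR.prod hfinR))).subset
    rintro _ ⟨a, ha, rfl⟩
    exact ⟨hLval a ha, hLval a⁻¹ (hmemX a ha), hRval a ha, hRval a⁻¹ (hmemX a ha)⟩
  -- the subgroup
  set Hc : Set G := {h : G | Lset h U = U ∧ Rset h U = U} with hHcdef
  have hHinv : ∀ h ∈ Hc, h⁻¹ ∈ Hc := by
    rintro h ⟨hL, hR⟩
    constructor
    · have h2 := congrArg (Lset h⁻¹) hL
      rw [Lset_comp, inv_mul_cancel, Lset_one] at h2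
      exact h2.symm
    · have h2 := congrArg (Rset h⁻¹) hR
      rw [Rset_comp, mul_inv_cancel, Rset_one] at h2
      exact h2.symm
  have hHmul : ∀ h₁ ∈ Hc, ∀ h₂ ∈ Hc, h₁ * h₂ ∈ Hc := by
    rintro h₁ ⟨l1, r1⟩ h₂ ⟨l2, r2⟩
    constructor
    · rw [← Lset_comp, l2, l1]
    · rw [← Rset_comp, r1, r2]
  set H : Subgroup G :=
    { carrier := Hc
      one_mem' := ⟨Lset_one U, Rset_one U⟩
      mul_mem' := fun {a b} ha hb => hHmul a ha b hb
      inv_mem' := fun {a} ha => hHinv a ha } with hHdef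
  have hHcoe : (H : Set G) = Hc := rfl
  have hHcl : IsClosed (H : Set G) := by
    have hcar : Hc = (⋂ u ∈ U, {h : G | h * u ∈ U}) ∩
        ((⋂ u ∈ U, {h : G | h⁻¹ * u ∈ U}) ∩
          ((⋂ u ∈ U, {h : G | u * h ∈ U}) ∩ (⋂ u ∈ U, {h : G | u * h⁻¹ ∈ U}))) := by
      ext h
      simp only [Set.mem_inter_iff, Set.mem_iInter, Set.mem_setOf_eq]
      constructor
      · intro hh
        obtain ⟨hL, hR⟩ := id hh
        obtain ⟨hLi, hRi⟩ := hHinv h hh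
        exact ⟨fun u hu => hL ▸ ⟨u, hu, rfl⟩, fun u hu => hLi ▸ ⟨u, hu, rfl⟩,
          fun u hu => hR ▸ ⟨u, hu, rfl⟩, fun u hu => hRi ▸ ⟨u, hu, rfl⟩⟩
      · rintro ⟨A1, A2, A3, A4⟩
        constructor
        · apply Set.Subset.antisymm
          · rintro _ ⟨u, hu, rfl⟩
            exact A1 u hu
          · intro u hu
            exact ⟨h⁻¹ * u, A2 u hu, by group⟩
        · apply Set.Subset.antisymm
          · rintro _ ⟨u, hu, rfl⟩
            exact A3 u hu
          · intro u hu
            exact ⟨u * h⁻¹, A4 u hu, by group⟩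
    rw [hHcoe, hcar]
    refine IsClosed.inter ?_ (IsClosed.inter ?_ (IsClosed.inter ?_ ?_))
    · exact isClosed_biInter fun u hu => hUcl.preimage (hr u)
    · exact isClosed_biInter fun u hu => hUcl.preimage ((hr u).comp hi)
    · exact isClosed_biInter fun u hu => hUcl.preimage (hl u)
    · exact isClosed_biInter fun u hu => hUcl.preimage ((hl u).comp hi)
  obtain ⟨u₀, hu₀U⟩ := hUne
  refine ⟨H, u₀⁻¹, Function.invFunOn ξ X '' (ξ '' X), hξfin.image _, hHcl, ?_, ?_⟩
  · -- the coset u₀⁻¹ H is inside the closure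
    intro x hx
    rw [Set.mem_smul_set] at hx
    obtain ⟨h, hh, rfl⟩ := hx
    have hhH : h ∈ Hc := hh
    have h1 : h⁻¹ * u₀ ∈ U := by
      have h2 := (hHinv h hhH).1
      rw [← h2]
      exact ⟨u₀, hu₀U, rfl⟩
    have h2 := hmemX _ (hUsubX h1)
    have h3 : (h⁻¹ * u₀)⁻¹ = u₀⁻¹ * h := by group
    rw [h3] at h2
    simpa [smul_eq_mul] using h2
  · -- the covering by finitely many cosets
    intro a ha
    have hbmem : ∃ b ∈ X, ξ b = ξ a := ⟨a, ha, rfl⟩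
    have hbX : Function.invFunOn ξ X (ξ a) ∈ X := Function.invFunOn_mem hbmem
    have hbeq : ξ (Function.invFunOn ξ X (ξ a)) = ξ a := Function.invFunOn_eq hbmem
    set b : G := Function.invFunOn ξ X (ξ a) with hbdef
    have hbF : b ∈ Function.invFunOn ξ X '' (ξ '' X) := ⟨ξ a, ⟨a, ha, rfl⟩, rfl⟩
    have e1 : Lset b U = Lset a U :=
      congrArg (fun p : Set G × Set G × Set G × Set G => p.1) hbeq
    have e2 : Lset b⁻¹ U = Lset a⁻¹ U :=
      congrArg (fun p : Set G × Set G × Set G × Set G => p.2.1) hbeq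
    have e3 : Rset b U = Rset a U :=
      congrArg (fun p : Set G × Set G × Set G × Set G => p.2.2.1) hbeq
    have e4 : Rset b⁻¹ U = Rset a⁻¹ U :=
      congrArg (fun p : Set G × Set G × Set G × Set G => p.2.2.2) hbeq
    constructor
    · have hmem : b⁻¹ * a ∈ Hc := by
        constructor
        · rw [← Lset_comp, ← e1, Lset_comp, inv_mul_cancel, Lset_one]
        · rw [← Rset_comp, e4, Rset_comp, inv_mul_cancel, Rset_one]
      have hrw : a = b * (b⁻¹ * a) := by group
      rw [hrw]
      exact Set.mul_mem_mul hbF hmem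
    · have hmem : a * b⁻¹ ∈ Hc := by
        constructor
        · rw [← Lset_comp, e2, Lset_comp, mul_inv_cancel, Lset_one]
        · rw [← Rset_comp, ← e3, Rset_comp, mul_inv_cancel, Rset_one]
      have hrw : a = (a * b⁻¹) * b := by group
      rw [hrw]
      exact Set.mul_mem_mul hmem hbF

/-- Algebraic approximate subgroups are almost subgroups: if `Λ` is an approximate subgroup
of the `k`-points `G = 𝐆(k)` of a linear algebraic group (realized in affine space via `ι`,
with polynomial group operation `(a,b) ↦ a⁻¹b`), then there is a Zariski-closed subgroup `H`
of `G`, an element `g ∈ G` and a finite set `F ⊆ G` with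
`gH ⊆ closure Λ ⊆ FH ∩ HF` (Zariski closure). -/
theorem approx_subgroup_almost_subgroup {k : Type*} [Field k] {N : ℕ} {G : Type*} [Group G]
    (ι : G → (Fin N → k)) (hι : Function.Injective ι)
    (q : Fin N → MvPolynomial (Fin N ⊕ Fin N) k)
    (hq : ∀ a b : G, ∀ i, ι (a⁻¹ * b) i = eval (Sum.elim (ι a) (ι b)) (q i))
    (Λ : Set G) (hΛ : IsApproxSubgroup Λ) :
    ∃ (H : Subgroup G) (g : G) (F : Set G), F.Finite ∧
      @IsClosed G (algGroupTop ι) (H : Set G) ∧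
      g • (H : Set G) ⊆ @closure G (algGroupTop ι) Λ ∧
      @closure G (algGroupTop ι) Λ ⊆ (F * (H : Set G)) ∩ ((H : Set G) * F) := by
  letI tG : TopologicalSpace G := algGroupTop ι
  haveI : TopologicalSpace.NoetherianSpace G := by
    have heq : algGroupTop ι = TopologicalSpace.induced
        ((fun x : Fin N → k =>
          (⟨RingHom.ker (eval x), RingHom.ker_isPrime (eval x)⟩ :
            PrimeSpectrum (MvPolynomial (Fin N) k))) ∘ ι) inferInstance := by
      unfold algGroupTop zariskiAffine
      rw [zariskiAffineAux_eq k N, induced_compose]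
    have h2 := noetherian_induced ((fun x : Fin N → k =>
      (⟨RingHom.ker (eval x), RingHom.ker_isPrime (eval x)⟩ :
        PrimeSpectrum (MvPolynomial (Fin N) k))) ∘ ι)
    rw [← heq] at h2
    exact h2
  have hLinv : ∀ a : G, Continuous fun x : G => a⁻¹ * x := by
    intro a
    apply continuous_of_polynomial ι _
      (fun i => bind₁ (Sum.elim (fun j => C (ι a j)) X) (q i))
    intro x i
    have hv : (Sum.elim (ι a) (ι x)) =
        fun s => eval (ι x) (Sum.elim (fun j => C (ι a j)) X s) := by
      funext s; cases s <;> simp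
    rw [hq a x i, eval_bind₁', ← hv]
  have hL : ∀ a : G, Continuous fun x : G => a * x := by
    intro a
    have h1 := hLinv a⁻¹
    simpa using h1
  have hI : Continuous fun x : G => x⁻¹ := by
    apply continuous_of_polynomial ι _
      (fun i => bind₁ (Sum.elim X (fun j => C (ι (1 : G) j))) (q i))
    intro x i
    have h1 : ι x⁻¹ i = eval (Sum.elim (ι x) (ι 1)) (q i) := by
      have h2 := hq x 1 i
      rwa [mul_one] at h2
    have hv : (Sum.elim (ι x) (ι (1 : G))) =
        fun s => eval (ι x) (Sum.elim X (fun j => C (ι (1 : G) j)) s) := by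
      funext s; cases s <;> simp
    rw [h1, eval_bind₁', ← hv]
  have hR : ∀ a : G, Continuous fun x : G => x * a := by
    intro a
    have hcomp : (fun x : G => x * a) =
        (fun y : G => y⁻¹) ∘ (fun y : G => a⁻¹ * y) ∘ (fun x : G => x⁻¹) := by
      funext x
      simp [mul_inv_rev]
    rw [hcomp]
    exact hI.comp ((hLinv a).comp hI)
  obtain ⟨H, g, F, hFfin, hHcl, hcoset, hcover⟩ := main_abstract hL hR hI Λ hΛ
  exact ⟨H, g, F, hFfin, hHcl, hcoset, hcover⟩
end

section
/- Let G be a locally compact second countable group and H ≤ G a closed subgroup. Then the set of nonempty elements of the closure of the G-orbit {gH : g ∈ G} in the Chabauty–Fell space of closed subsets of G equals the set of left cosets {gH : g ∈ G}; that is, Ω_H \ {∅} = G/H. -/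
open Set Pointwise

/-- The space of closed subsets of `X`. -/
def ClosedSubsets (X : Type*) [TopologicalSpace X] : Type _ := {A : Set X // IsClosed A}

/-- The Chabauty–Fell topology on the space of closed subsets of `X`. -/
def chabautyFell (X : Type*) [TopologicalSpace X] : TopologicalSpace (ClosedSubsets X) :=
  TopologicalSpace.generateFrom
    ({U | ∃ K : Set X, IsCompact K ∧ U = {A : ClosedSubsets X | A.1 ∩ K = ∅}} ∪
     {U | ∃ V : Set X, IsOpen V ∧ U = {A : ClosedSubsets X | (A.1 ∩ V).Nonempty}})

/-- Hulls of closed subgroups: for a closed subgroup `H` of a locally compact second countable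
group `G`, the set of nonempty elements of the hull `Ω_H` (the closure of the orbit
`{gH : g ∈ G}` in the Chabauty–Fell space) is exactly the set of left cosets of `H`. -/
theorem hull_of_closed_subgroup {G : Type*} [Group G] [TopologicalSpace G]
    [IsTopologicalGroup G] [LocallyCompactSpace G] [SecondCountableTopology G] [T2Space G]
    (H : Subgroup G) (hH : IsClosed (H : Set G)) :
    {A : ClosedSubsets G |
        A ∈ @closure (ClosedSubsets G) (chabautyFell G)
          {A : ClosedSubsets G | ∃ g : G, A.1 = g • (H : Set G)} ∧ A.1.Nonempty}
      = {A : ClosedSubsets G | ∃ g : G, A.1 = g • (H : Set G)} := by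
  letI : TopologicalSpace (ClosedSubsets G) := chabautyFell G
  have hgen : ∀ s ∈ ({U | ∃ K : Set G, IsCompact K ∧ U = {A : ClosedSubsets G | A.1 ∩ K = ∅}} ∪
      {U | ∃ V : Set G, IsOpen V ∧ U = {A : ClosedSubsets G | (A.1 ∩ V).Nonempty}}),
      IsOpen s := fun s hs => TopologicalSpace.isOpen_generateFrom_of_mem hs
  have hopen_miss : ∀ K : Set G, IsCompact K → IsOpen {A : ClosedSubsets G | A.1 ∩ K = ∅} :=
    fun K hK => hgen _ (Or.inl ⟨K, hK, rfl⟩)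
  have hopen_hit : ∀ V : Set G, IsOpen V → IsOpen {A : ClosedSubsets G | (A.1 ∩ V).Nonempty} :=
    fun V hV => hgen _ (Or.inr ⟨V, hV, rfl⟩)
  ext A
  simp only [mem_setOf_eq]
  constructor
  · rintro ⟨hcl, x, hx⟩
    -- Claim 2: x ∈ A, h ∈ H → x * h ∈ A
    have claim2 : ∀ h : G, h ∈ H → x * h ∈ A.1 := by
      intro h hh
      by_contra hxh
      obtain ⟨K, hKc, hxhK, hKsub⟩ := exists_compact_subset A.2.isOpen_compl hxh
      have hUopen : IsOpen ((fun u : G => u * h) ⁻¹' interior K) :=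
        (isOpen_interior).preimage (continuous_mul_right h)
      set N := {B : ClosedSubsets G | B.1 ∩ K = ∅} ∩
        {B : ClosedSubsets G | (B.1 ∩ ((fun u : G => u * h) ⁻¹' interior K)).Nonempty}
      have hNopen : IsOpen N := (hopen_miss K hKc).inter (hopen_hit _ hUopen)
      have hAN : A ∈ N := by
        constructor
        · exact eq_empty_of_subset_empty (fun y ⟨hy1, hy2⟩ => hKsub hy2 hy1)
        · exact ⟨x, hx, hxhK⟩
      obtain ⟨B, hBN, g, hBg⟩ := mem_closure_iff.mp hcl N hNopen hAN
      obtain ⟨y, hyB, hyU⟩ := hBN.2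
      rw [hBg] at hyB
      obtain ⟨h₁, hh₁, rfl⟩ := hyB
      have hmem : g • (h₁ * h) ∈ B.1 ∩ K := by
        constructor
        · rw [hBg]; exact ⟨h₁ * h, H.mul_mem hh₁ hh, rfl⟩
        · have : g • h₁ * h ∈ interior K := hyU
          simpa [smul_eq_mul, mul_assoc] using interior_subset this
      rw [hBN.1] at hmem
      exact hmem
    -- Claim 1: y, z ∈ A → y⁻¹ * z ∈ H
    have claim1 : ∀ y z : G, y ∈ A.1 → z ∈ A.1 → y⁻¹ * z ∈ (H : Set G) := by
      intro y z hy hz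
      by_contra hne
      have hopenC : IsOpen ((fun p : G × G => p.1⁻¹ * p.2) ⁻¹' ((H : Set G)ᶜ)) :=
        hH.isOpen_compl.preimage (continuous_fst.inv.mul continuous_snd)
      obtain ⟨U, V, hU, hV, hyU, hzV, hUV⟩ := isOpen_prod_iff.mp hopenC y z hne
      set N := {B : ClosedSubsets G | (B.1 ∩ U).Nonempty} ∩
        {B : ClosedSubsets G | (B.1 ∩ V).Nonempty}
      have hNopen : IsOpen N := (hopen_hit U hU).inter (hopen_hit V hV)
      obtain ⟨B, hBN, g, hBg⟩ := mem_closure_iff.mp hcl N hNopen ⟨⟨y, hy, hyU⟩, ⟨z, hz, hzV⟩⟩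
      obtain ⟨u, huB, huU⟩ := hBN.1
      obtain ⟨v, hvB, hvV⟩ := hBN.2
      rw [hBg] at huB hvB
      obtain ⟨h₁, hh₁, rfl⟩ := huB
      obtain ⟨h₂, hh₂, rfl⟩ := hvB
      have : (g • h₁)⁻¹ * (g • h₂) ∈ (H : Set G)ᶜ := hUV (Set.mk_mem_prod huU hvV)
      apply this
      have : h₁⁻¹ * h₂ ∈ H := H.mul_mem (H.inv_mem hh₁) hh₂
      simpa [smul_eq_mul, mul_assoc] using this
    refine ⟨x, ?_⟩
    ext z
    constructor
    · intro hz
      exact ⟨x⁻¹ * z, claim1 x z hx hz, by simp [smul_eq_mul]⟩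
    · rintro ⟨h, hh, rfl⟩
      exact claim2 h hh
  · rintro ⟨g, hg⟩
    refine ⟨subset_closure ⟨g, hg⟩, g, ?_⟩
    rw [hg]
    exact ⟨1, H.one_mem, by simp⟩
end

section
/- Let G be a locally compact second countable group and let P, Q be closed subsets of G with P ⊆ QF for some finite subset F ⊆ G. Then for every pair (P', Q') in the closure of the diagonal orbit {(gP, gQ) : g ∈ G} in C(G) × C(G) (Chabauty–Fell topologies), one has P' ⊆ Q'F. In particular, if Q' = ∅ then P' = ∅. -/
open Set Pointwise

/-- Quasi-monotone joinings: let `P, Q` be closed subsets of a locally compact second countable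
group `G` with `P ⊆ QF` for a finite set `F`. Then every pair `(P', Q')` in the closure of the
diagonal orbit `{(gP, gQ) : g ∈ G}` in `C(G) × C(G)` satisfies `P' ⊆ Q'F`; in particular if
`Q' = ∅` then `P' = ∅`. -/
theorem quasi_monotone_hull {G : Type*} [Group G] [TopologicalSpace G]
    [IsTopologicalGroup G] [LocallyCompactSpace G] [SecondCountableTopology G] [T2Space G]
    (P Q : Set G) (hP : IsClosed P) (hQ : IsClosed Q)
    (F : Set G) (hF : F.Finite) (hPQF : P ⊆ Q * F) :
    ∀ x : ClosedSubsets G × ClosedSubsets G,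
      x ∈ @closure (ClosedSubsets G × ClosedSubsets G)
          (@instTopologicalSpaceProd _ _ (chabautyFell G) (chabautyFell G))
          {y : ClosedSubsets G × ClosedSubsets G |
            ∃ g : G, y = (⟨g • P, hP.smul g⟩, ⟨g • Q, hQ.smul g⟩)} →
      (x.1.1 ⊆ x.2.1 * F ∧ (x.2.1 = ∅ → x.1.1 = ∅)) := by
  letI : TopologicalSpace (ClosedSubsets G) := chabautyFell G
  rintro ⟨P', Q'⟩ hx
  have key : P'.1 ⊆ Q'.1 * F := by
    intro p hp
    by_contra hpn
    -- `Q'.1 * F` is closed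
    have hQF : IsClosed (Q'.1 * F) := by
      have heq : Q'.1 * F = ⋃ f ∈ F, (fun x => x * f) '' Q'.1 := by
        ext x
        simp only [Set.mem_mul, Set.mem_iUnion, Set.mem_image]
        constructor
        · rintro ⟨a, ha, b, hb, rfl⟩; exact ⟨b, hb, a, ha, rfl⟩
        · rintro ⟨b, hb, a, ha, rfl⟩; exact ⟨a, ha, b, hb, rfl⟩
      rw [heq]
      exact hF.isClosed_biUnion fun f _ =>
        (Homeomorph.mulRight f).isClosedMap _ Q'.2
    obtain ⟨K0, hK0c, hpInt, hK0sub⟩ :=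
      exists_compact_subset hQF.isOpen_compl hpn
    have hKc : IsCompact (K0 * F⁻¹) := hK0c.mul (hF.inv.isCompact)
    have hQ'K : Q'.1 ∩ (K0 * F⁻¹) = ∅ := by
      ext q
      simp only [mem_inter_iff, mem_empty_iff_false, iff_false, not_and]
      intro hq hqK
      obtain ⟨a, ha, b, hb, rfl⟩ := hqK
      have : a ∈ Q'.1 * F := by
        have : a = (a * b) * b⁻¹ := by group
        rw [this]
        exact Set.mul_mem_mul hq (by simpa using hb)
      exact hK0sub ha this
    -- open sets in the Chabauty–Fell topology
    have hU1 : IsOpen {A : ClosedSubsets G | (A.1 ∩ interior K0).Nonempty} :=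
      TopologicalSpace.GenerateOpen.basic _ (Or.inr ⟨interior K0, isOpen_interior, rfl⟩)
    have hU2 : IsOpen {A : ClosedSubsets G | A.1 ∩ (K0 * F⁻¹) = ∅} :=
      TopologicalSpace.GenerateOpen.basic _ (Or.inl ⟨K0 * F⁻¹, hKc, rfl⟩)
    have hO : IsOpen ({A : ClosedSubsets G | (A.1 ∩ interior K0).Nonempty} ×ˢ
        {A : ClosedSubsets G | A.1 ∩ (K0 * F⁻¹) = ∅}) := hU1.prod hU2
    have hmem : (P', Q') ∈ ({A : ClosedSubsets G | (A.1 ∩ interior K0).Nonempty} ×ˢ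
        {A : ClosedSubsets G | A.1 ∩ (K0 * F⁻¹) = ∅}) :=
      ⟨⟨p, hp, hpInt⟩, hQ'K⟩
    obtain ⟨y, hyO, g, rfl⟩ := (mem_closure_iff.1 hx) _ hO hmem
    obtain ⟨z, hzP, hzV⟩ := hyO.1
    obtain ⟨p', hp', rfl⟩ := hzP
    obtain ⟨q, hq, f, hf, hqf⟩ := hPQF hp'
    have hgq : g * q ∈ K0 * F⁻¹ := by
      have : g * q = (g • p') * f⁻¹ := by
        simp only [smul_eq_mul, ← hqf]; group
      rw [this]
      exact Set.mul_mem_mul (interior_subset hzV) (by simpa using hf)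
    have : g * q ∈ (g • Q : Set G) ∩ (K0 * F⁻¹) :=
      ⟨⟨q, hq, rfl⟩, hgq⟩
    rw [hyO.2] at this
    exact this
  refine ⟨key, fun hQ'empty => ?_⟩
  rw [Set.eq_empty_iff_forall_notMem]
  intro p hp
  have := key hp
  rw [hQ'empty, Set.empty_mul] at this
  exact this
end

section
/- Let G be a locally compact second countable group and P₁, …, P_n closed subsets of G such that P := P₁ ∪ ⋯ ∪ P_n is relatively dense in G. Then there exists an index i such that P_i⁻¹P_i is relatively dense in G. -/
open Set Pointwise

/-- A subset `P` of a locally compact group `G` is relatively dense if `G = PK` for some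
compact `K`. -/
def RelativelyDense {G : Type*} [Group G] [TopologicalSpace G] (P : Set G) : Prop :=
  ∃ K : Set G, IsCompact K ∧ P * K = Set.univ

namespace RelDenseAux

variable {G : Type*} [Group G] [TopologicalSpace G] [IsTopologicalGroup G]

/-- The set of `x` such that the translate `x • O` hits `Q`. -/
def hit (Q O : Set G) : Set G := {x | (Q ∩ x • O).Nonempty}

omit [TopologicalSpace G] [IsTopologicalGroup G] in
lemma mem_hit {Q O : Set G} {x : G} : x ∈ hit Q O ↔ ∃ p ∈ Q, ∃ o ∈ O, x * o = p := by
  constructor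
  · rintro ⟨p, hpQ, hpO⟩
    obtain ⟨o, ho, rfl⟩ := hpO
    exact ⟨x • o, hpQ, o, ho, rfl⟩
  · rintro ⟨p, hp, o, ho, rfl⟩
    exact ⟨x * o, hp, ⟨o, ho, rfl⟩⟩

omit [TopologicalSpace G] [IsTopologicalGroup G] in
lemma umem_of_superset {u : Ultrafilter G} {s t : Set G} (h : s ∈ u) (hsub : s ⊆ t) : t ∈ u :=
  Ultrafilter.mem_coe.1 (Filter.mem_of_superset (Ultrafilter.mem_coe.2 h) hsub)

omit [TopologicalSpace G] [IsTopologicalGroup G] in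
lemma hit_mono {Q O O' : Set G} (h : O ⊆ O') : hit Q O ⊆ hit Q O' := by
  rintro x hx
  rw [mem_hit] at hx ⊢
  obtain ⟨p, hp, o, ho, rfl⟩ := hx
  exact ⟨x * o, hp, o, h ho, rfl⟩

omit [TopologicalSpace G] [IsTopologicalGroup G] in
lemma hit_subset_biUnion {Q O : Set G} {ι : Type*} {t : Finset ι} {W : ι → Set G}
    (h : O ⊆ ⋃ j ∈ t, W j) : hit Q O ⊆ ⋃ j ∈ t, hit Q (W j) := by
  intro x hx
  rw [mem_hit] at hx
  obtain ⟨p, hp, o, ho, rfl⟩ := hx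
  obtain ⟨j, hjt, hjo⟩ := by simpa using h ho
  exact mem_biUnion hjt (mem_hit.2 ⟨x * o, hp, o, hjo, rfl⟩)

/-- Right-translation action on ultrafilters on `G`. -/
def rho (g : G) (u : Ultrafilter G) : Ultrafilter G := u.map (· * g)

omit [TopologicalSpace G] [IsTopologicalGroup G] in
lemma mem_rho {g : G} {u : Ultrafilter G} {s : Set G} :
    s ∈ rho g u ↔ (· * g) ⁻¹' s ∈ u := Ultrafilter.mem_map

omit [TopologicalSpace G] [IsTopologicalGroup G] in
lemma rho_rho (g x : G) (u : Ultrafilter G) : rho g (rho x u) = rho (x * g) u := by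
  unfold rho
  rw [Ultrafilter.map_map]
  congr 1
  funext y
  simp [Function.comp, mul_assoc]

omit [TopologicalSpace G] [IsTopologicalGroup G] in
lemma continuous_rho (g : G) : Continuous (rho g) := by
  refine continuous_generateFrom_iff.mpr ?_
  rintro _ ⟨s, rfl⟩
  have h : rho g ⁻¹' {u : Ultrafilter G | s ∈ u} = {u : Ultrafilter G | (· * g) ⁻¹' s ∈ u} := by
    ext u; exact mem_rho
  rw [h]
  exact ultrafilter_isOpen_basic _

omit [TopologicalSpace G] [IsTopologicalGroup G] in
lemma preimage_hit (g : G) (Q O : Set G) : (· * g) ⁻¹' (hit Q O) = hit Q (g • O) := by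
  ext x
  simp only [mem_preimage, mem_hit]
  constructor
  · rintro ⟨p, hp, o, ho, rfl⟩
    exact ⟨x * g * o, hp, g * o, smul_mem_smul_set ho, (mul_assoc _ _ _).symm⟩
  · rintro ⟨p, hp, o', ho', rfl⟩
    obtain ⟨o, ho, rfl⟩ := ho'
    exact ⟨x * (g * o), hp, o, ho, by simp [mul_assoc]⟩

/-- The limit set of `Q` along an ultrafilter `u` of translations. -/
def limitSet (Q : Set G) (u : Ultrafilter G) : Set G :=
  {a | ∀ W : Set G, IsOpen W → a ∈ W → hit Q W ∈ u}

lemma exists_limit_mem {Q L : Set G} (hL : IsCompact L) {u : Ultrafilter G}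
    (h : hit Q L ∈ u) : ∃ a ∈ L, a ∈ limitSet Q u := by
  by_contra hc
  push_neg at hc
  simp only [limitSet, mem_setOf_eq, not_forall] at hc
  choose W hWo hWa hWu using fun (a : L) => hc a a.2
  obtain ⟨t, ht⟩ := hL.elim_finite_subcover W hWo
    (fun a ha => mem_iUnion.2 ⟨⟨a, ha⟩, hWa ⟨a, ha⟩⟩)
  have hsub : hit Q L ⊆ ⋃ a ∈ t, hit Q (W a) :=
    hit_subset_biUnion (by simpa using ht)
  have : (⋃ a ∈ t, hit Q (W a)) ∈ u := umem_of_superset h hsub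
  obtain ⟨a, _, hau⟩ := (Ultrafilter.finite_biUnion_mem_iff t.finite_toSet).1 this
  exact hWu a hau

end RelDenseAux

open RelDenseAux

/-- If `P₁, …, Pₙ` are closed subsets of a locally compact second countable group `G` whose
union is relatively dense, then `Pᵢ⁻¹Pᵢ` is relatively dense for some `i`. -/
theorem relativelyDense_inv_mul_of_union {G : Type*} [Group G] [TopologicalSpace G]
    [IsTopologicalGroup G] [LocallyCompactSpace G] [SecondCountableTopology G] [T2Space G]
    {n : ℕ} (P : Fin n → Set G) (hclosed : ∀ i, IsClosed (P i))
    (hdense : RelativelyDense (⋃ i, P i)) :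
    ∃ i, RelativelyDense ((P i)⁻¹ * P i) := by
  classical
  obtain ⟨K, hKc, hKuniv⟩ := hdense
  -- Every `x` sees some `P i` at bounded distance.
  have hsurr : ∀ x : G, x ∈ ⋃ i, hit (P i) K⁻¹ := by
    intro x
    have : x ∈ (⋃ i, P i) * K := hKuniv ▸ mem_univ x
    obtain ⟨p, hp, k, hk, rfl⟩ := this
    obtain ⟨i, hpi⟩ := mem_iUnion.1 hp
    exact mem_iUnion.2 ⟨i, mem_hit.2 ⟨p, hpi, k⁻¹, inv_mem_inv.2 hk, by group⟩⟩
  haveI : Nonempty (Ultrafilter G) := ⟨pure 1⟩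
  -- The collection of nonempty closed invariant subsets of `βG`.
  set S : Set (Set (Ultrafilter G)) :=
    {Z | Z.Nonempty ∧ IsClosed Z ∧ ∀ g : G, rho g '' Z ⊆ Z} with hS
  have huniv_mem : (univ : Set (Ultrafilter G)) ∈ S :=
    ⟨univ_nonempty, isClosed_univ, fun _ => by simp⟩
  -- Zorn: a minimal element of `S` exists.
  obtain ⟨Z, -, hZmin⟩ := zorn_superset_nonempty S (fun c hcS hchain hcne => by
    refine ⟨⋂₀ c, ⟨?_, ?_, ?_⟩, fun s hs => sInter_subset_of_mem hs⟩
    · haveI : Nonempty c := hcne.to_subtype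
      have := IsCompact.nonempty_iInter_of_directed_nonempty_isCompact_isClosed
        (fun s : c => (s : Set (Ultrafilter G)))
        (fun i j => by
          rcases hchain.total i.2 j.2 with h | h
          · exact ⟨i, le_refl _, h⟩
          · exact ⟨j, h, le_refl _⟩)
        (fun s => (hcS s.2).1)
        (fun s => (hcS s.2).2.1.isCompact)
        (fun s => (hcS s.2).2.1)
      rwa [sInter_eq_iInter]
    · exact isClosed_sInter fun s hs => (hcS hs).2.1
    · intro g
      rintro _ ⟨u, hu, rfl⟩
      exact fun s hs => (hcS hs).2.2 g ⟨u, hu s hs, rfl⟩)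
    univ huniv_mem
  obtain ⟨⟨hZne, hZcl, hZinv⟩, hZm⟩ := hZmin
  obtain ⟨z, hz⟩ := hZne
  -- Find `i` and a point `a` of the limit set of `P i` along `z`.
  have hUz : (⋃ i, hit (P i) K⁻¹) ∈ z :=
    umem_of_superset (Ultrafilter.mem_coe.1 Filter.univ_mem) (fun x _ => hsurr x)
  have : ∃ i, hit (P i) K⁻¹ ∈ z := by
    have h2 : (⋃ i ∈ (Finset.univ : Finset (Fin n)), hit (P i) K⁻¹) ∈ z := by
      simpa using hUz
    obtain ⟨i, _, hi⟩ :=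
      (Ultrafilter.finite_biUnion_mem_iff (Finset.univ : Finset (Fin n)).finite_toSet).1 h2
    exact ⟨i, hi⟩
  obtain ⟨i, hiz⟩ := this
  obtain ⟨a, -, ha⟩ := exists_limit_mem hKc.inv hiz
  refine ⟨i, ?_⟩
  -- A relatively compact open neighborhood `W₀` of `a`.
  obtain ⟨N, hNc, hNnhds⟩ := exists_compact_mem_nhds a
  set W₀ : Set G := interior N with hW₀
  have haW₀ : a ∈ W₀ := mem_interior_iff_mem_nhds.2 hNnhds
  have hW₀open : IsOpen W₀ := isOpen_interior
  have hclW₀ : IsCompact (closure W₀) :=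
    hNc.of_isClosed_subset isClosed_closure (closure_minimal interior_subset hNc.isClosed)
  set B : Set G := hit (P i) W₀ with hB
  have hBz : B ∈ z := ha W₀ hW₀open haW₀
  -- Return times: every element of `Z` returns to the basic open set `{B ∈ ·}` within
  -- finitely many translations.
  have hreturn : ∀ u ∈ Z, ∃ g : G, B ∈ rho g u := by
    intro u hu
    -- orbit closure of `u` is a nonempty closed invariant subset of `Z`, hence equals `Z`.
    set OC : Set (Ultrafilter G) := closure (Set.range fun g => rho g u) with hOC
    have hOCS : OC ∈ S := by
      refine ⟨⟨rho 1 u, subset_closure ⟨1, rfl⟩⟩, isClosed_closure, fun h => ?_⟩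
      calc rho h '' OC ⊆ closure (rho h '' Set.range fun g => rho g u) :=
            image_closure_subset_closure_image (continuous_rho h)
        _ ⊆ OC := by
            apply closure_mono
            rintro _ ⟨_, ⟨g, rfl⟩, rfl⟩
            exact ⟨g * h, (rho_rho h g u).symm⟩
    have hOCZ : OC ⊆ Z := by
      rw [hOC]
      apply hZcl.closure_subset_iff.2
      rintro _ ⟨g, rfl⟩
      exact hZinv g ⟨u, hu, rfl⟩
    have hzOC : z ∈ OC := hZm hOCS hOCZ hz
    have : ({v : Ultrafilter G | B ∈ v} ∩ Set.range fun g => rho g u).Nonempty :=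
      mem_closure_iff.1 hzOC _ (ultrafilter_isOpen_basic B) hBz
    obtain ⟨v, hvB, g, rfl⟩ := this
    exact ⟨g, hvB⟩
  -- Compactness of `Z`: finitely many return times suffice.
  have hZcomp : IsCompact Z := hZcl.isCompact
  have hcover : Z ⊆ ⋃ g : G, rho g ⁻¹' {v : Ultrafilter G | B ∈ v} := by
    intro u hu
    obtain ⟨g, hg⟩ := hreturn u hu
    exact mem_iUnion.2 ⟨g, hg⟩
  have hopen : ∀ g : G, IsOpen (rho g ⁻¹' {v : Ultrafilter G | B ∈ v}) := by
    intro g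
    have : rho g ⁻¹' {v : Ultrafilter G | B ∈ v} = {u : Ultrafilter G | (· * g) ⁻¹' B ∈ u} := by
      ext u; exact mem_rho
    rw [this]
    exact ultrafilter_isOpen_basic _
  obtain ⟨t, ht⟩ := hZcomp.elim_finite_subcover _ hopen hcover
  -- The compact set `D`.
  set D : Set G := ⋃ g ∈ t, g • closure W₀ with hD
  have hDc : IsCompact D := t.finite_toSet.isCompact_biUnion fun g _ => hclW₀.smul g
  -- Key: the limit set of `P i` along `z` meets every translate `x • D`.
  have hkey : ∀ x : G, ∃ b ∈ limitSet (P i) z, b ∈ x • D := by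
    intro x
    have hxz : rho x z ∈ Z := hZinv x ⟨z, hz, rfl⟩
    obtain ⟨g, hgt, hg⟩ := by simpa using ht hxz
    have hBmem : B ∈ rho (x * g) z := by rw [← rho_rho]; exact mem_rho.2 hg
    have : hit (P i) ((x * g) • W₀) ∈ z := by
      rw [← preimage_hit]; exact mem_rho.1 hBmem
    have h2 : hit (P i) ((x * g) • closure W₀) ∈ z :=
      umem_of_superset this (hit_mono (smul_set_mono subset_closure))
    obtain ⟨b, hbL, hb⟩ := exists_limit_mem (hclW₀.smul (x * g)) h2
    refine ⟨b, hb, ?_⟩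
    have : (x * g) • closure W₀ = x • (g • closure W₀) := by rw [smul_smul]
    rw [this] at hbL
    exact smul_set_mono (subset_biUnion_of_mem (u := fun g => g • closure W₀) hgt) hbL
  -- A compact symmetric-ish neighborhood `V` of `1` for the transfer step.
  obtain ⟨V, hVc, hVnhds⟩ := exists_compact_mem_nhds (1 : G)
  -- Transfer: differences of limit-set points are in `P i⁻¹ * P i * V⁻¹`.
  have htransfer : ∀ a' ∈ limitSet (P i) z, ∀ b' ∈ limitSet (P i) z,
      a'⁻¹ * b' ∈ (P i)⁻¹ * P i * V⁻¹ := by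
    intro a' ha' b' hb'
    obtain ⟨V', hV'open, hV'1, hV'V⟩ := exists_open_nhds_one_mul_subset hVnhds
    set c : G := a'⁻¹ * b' with hc
    set V₁ : Set G := (fun v => c⁻¹ * v⁻¹ * c) ⁻¹' V' with hV₁
    have hV₁open : IsOpen V₁ := by
      apply hV'open.preimage
      continuity
    have hV₁1 : (1 : G) ∈ V₁ := by simp [hV₁, hV'1]
    have hW₁ : hit (P i) (a' • V₁) ∈ z := ha' _ (hV₁open.smul a') ⟨1, hV₁1, mul_one a'⟩
    have hW₂ : hit (P i) (b' • V') ∈ z := hb' _ (hV'open.smul b') ⟨1, hV'1, mul_one b'⟩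
    have hne : (hit (P i) (a' • V₁) ∩ hit (P i) (b' • V')).Nonempty :=
      Ultrafilter.nonempty_of_mem (Ultrafilter.mem_coe.1 (Filter.inter_mem (Ultrafilter.mem_coe.2 hW₁) (Ultrafilter.mem_coe.2 hW₂)))
    obtain ⟨x, hx₁, hx₂⟩ := hne
    rw [mem_hit] at hx₁ hx₂
    obtain ⟨p, hp, o₁, ho₁, hpx⟩ := hx₁
    obtain ⟨q, hq, o₂, ho₂, hqx⟩ := hx₂
    obtain ⟨v₁, hv₁, rfl⟩ := ho₁
    obtain ⟨v₂, hv₂, rfl⟩ := ho₂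
    -- p = x * (a' * v₁), q = x * (b' * v₂)
    have hpq : p⁻¹ * q = v₁⁻¹ * c * v₂ := by
      rw [← hpx, ← hqx]
      simp only [smul_eq_mul, hc]
      group
    have hv₁' : c⁻¹ * v₁⁻¹ * c ∈ V' := hv₁
    have : p⁻¹ * q ∈ c • (V' * V') := by
      rw [hpq]
      refine ⟨(c⁻¹ * v₁⁻¹ * c) * v₂, mul_mem_mul hv₁' hv₂, ?_⟩
      simp only [smul_eq_mul]
      group
    have hw : p⁻¹ * q ∈ c • V := smul_set_mono hV'V this
    obtain ⟨w, hwV, hcw⟩ := hw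
    have : c = (p⁻¹ * q) * w⁻¹ := by rw [← hcw]; simp [smul_eq_mul, mul_assoc]
    rw [hc] at this ⊢
    rw [this]
    exact mul_mem_mul (mul_mem_mul (inv_mem_inv.2 hp) hq) (inv_mem_inv.2 hwV)
  -- Conclude.
  refine ⟨V⁻¹ * D⁻¹, (hVc.inv).mul hDc.inv, ?_⟩
  rw [eq_univ_iff_forall]
  intro x
  obtain ⟨b, hb, hbx⟩ := hkey (a * x)
  obtain ⟨d, hd, hbd⟩ := hbx
  have hcmem : a⁻¹ * b ∈ (P i)⁻¹ * P i * V⁻¹ := htransfer a ha b hb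
  have hxval : x = (a⁻¹ * b) * d⁻¹ := by
    rw [← hbd]; simp [smul_eq_mul]; group
  rw [show (P i)⁻¹ * P i * (V⁻¹ * D⁻¹) = ((P i)⁻¹ * P i * V⁻¹) * D⁻¹ from
    (mul_assoc _ _ _).symm]
  rw [hxval]
  exact mul_mem_mul hcmem (inv_mem_inv.2 hd)
end

section
/- Let G be a non-unimodular locally compact second countable group with left Haar measure m_G and modular function Δ_G. Then there exists a continuous function ρ : G → ℝ such that ρ(g) > 0 for all g ∈ G, ∫_G ρ dm_G = 1, and ∫_G ρ(t) Δ_G(t) dm_G(t) > 1. -/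
open MeasureTheory

lemma exists_cont_pos_integrable {G : Type*} [TopologicalSpace G]
    [LocallyCompactSpace G] [SecondCountableTopology G] [T2Space G] [Nonempty G]
    [MeasurableSpace G] [BorelSpace G]
    (m : Measure G) [IsFiniteMeasureOnCompacts m] :
    ∃ f : G → ℝ, Continuous f ∧ (∀ x, 0 < f x) ∧ Integrable f m := by
  have hsc : SigmaCompactSpace G := by infer_instance
  -- choose bump functions on a compact exhaustion
  have H : ∀ n : ℕ, ∃ f : C(G, ℝ), Set.EqOn f 1 (compactCovering G n) ∧ Set.EqOn f 0 (∅ : Set G)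
      ∧ HasCompactSupport f ∧ ∀ x, f x ∈ Set.Icc (0:ℝ) 1 :=
    fun n => exists_continuous_one_zero_of_isCompact (isCompact_compactCovering G n)
      isClosed_empty (by simp)
  choose f hf1 _ hfc hf01 using H
  have hfcont : ∀ n, Continuous (f n) := fun n => (f n).continuous
  have hfint : ∀ n, Integrable (f n) m := fun n =>
    (hfcont n).integrable_of_hasCompactSupport (hfc n)
  set c : ℕ → ℝ := fun n => ∫ x, f n x ∂m with hc
  have hcnn : ∀ n, 0 ≤ c n := fun n => integral_nonneg fun x => (hf01 n x).1
  set a : ℕ → ℝ := fun n => (1/2)^n / (1 + c n) with ha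
  have hapos : ∀ n, 0 < a n := fun n =>
    div_pos (pow_pos (by norm_num) n) (by linarith [hcnn n])
  have hale : ∀ n, a n ≤ (1/2)^n := fun n => by
    rw [ha]
    exact div_le_self (by positivity) (by linarith [hcnn n])
  set g : ℕ → G → ℝ := fun n x => a n * f n x with hg
  have hgnn : ∀ n x, 0 ≤ g n x := fun n x => mul_nonneg (hapos n).le (hf01 n x).1
  have hgle : ∀ n x, ‖g n x‖ ≤ (1/2)^n := by
    intro n x
    rw [Real.norm_of_nonneg (hgnn n x)]
    calc a n * f n x ≤ a n * 1 := by
          exact mul_le_mul_of_nonneg_left (hf01 n x).2 (hapos n).le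
      _ ≤ (1/2)^n := by simpa using hale n
  have hsum : Summable (fun n : ℕ => ((1:ℝ)/2)^n) := summable_geometric_of_lt_one (by norm_num) (by norm_num)
  refine ⟨fun x => ∑' n, g n x, ?_, ?_, ?_⟩
  · exact continuous_tsum (fun n => continuous_const.mul (hfcont n)) hsum (fun n x => hgle n x)
  · intro x
    obtain ⟨n, hn⟩ := exists_mem_compactCovering x
    have hs : Summable (fun n => g n x) :=
      (hsum.of_norm_bounded (fun n => hgle n x))
    have : g n x ≤ ∑' k, g k x := Summable.le_tsum hs n (fun k _ => hgnn k x)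
    have : a n ≤ ∑' k, g k x := by
      simpa [hg, hf1 n hn, Pi.one_apply] using this
    linarith [hapos n]
  · -- integrability
    constructor
    · exact (continuous_tsum (fun n => continuous_const.mul (hfcont n)) hsum
        (fun n x => hgle n x)).aestronglyMeasurable
    · rw [hasFiniteIntegral_iff_ofReal]
      · calc ∫⁻ x, ENNReal.ofReal (∑' n, g n x) ∂m
            = ∫⁻ x, ∑' n, ENNReal.ofReal (g n x) ∂m := by
              refine lintegral_congr fun x => ?_
              exact ENNReal.ofReal_tsum_of_nonneg (fun n => hgnn n x)
                (hsum.of_norm_bounded (fun n => hgle n x))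
          _ = ∑' n, ∫⁻ x, ENNReal.ofReal (g n x) ∂m :=
              lintegral_tsum fun n =>
                ((ENNReal.continuous_ofReal.comp (continuous_const.mul (hfcont n))).measurable).aemeasurable
          _ = ∑' n, ENNReal.ofReal (∫ x, g n x ∂m) := by
              refine tsum_congr fun n => ?_
              rw [ofReal_integral_eq_lintegral_ofReal ((hfint n).const_mul _)
                (Filter.Eventually.of_forall fun x => hgnn n x)]
          _ ≤ ∑' n, ENNReal.ofReal ((1/2)^n) := by
              refine ENNReal.tsum_le_tsum fun n => ENNReal.ofReal_le_ofReal ?_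
              rw [hg]
              simp only [integral_const_mul]
              calc a n * ∫ x, f n x ∂m ≤ (1/2)^n/(1 + c n) * (1 + c n) := by
                    rw [ha]
                    refine mul_le_mul_of_nonneg_left ?_ (div_nonneg (by positivity) (by linarith [hcnn n]))
                    linarith [hcnn n]
                _ = (1/2)^n := div_mul_cancel₀ _ (by linarith [hcnn n])
          _ < ⊤ := by
              rw [← ENNReal.ofReal_tsum_of_nonneg (fun n => by positivity) hsum]
              exact ENNReal.ofReal_lt_top
      · exact Filter.Eventually.of_forall fun x => tsum_nonneg fun n => hgnn n x

/-- Let `G` be a non-unimodular locally compact second countable group with left Haar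
measure `m` and modular function `Δ` (so `m(Eg) = Δ(g) m(E)`, i.e.
`(· * g)₊m = Δ(g)⁻¹ • m`). Then there is a continuous everywhere positive function
`ρ : G → ℝ` with `∫ ρ dm = 1` and `∫ ρ Δ dm > 1`. -/
theorem exists_density_nonunimodular {G : Type*} [Group G] [TopologicalSpace G]
    [IsTopologicalGroup G] [LocallyCompactSpace G] [SecondCountableTopology G] [T2Space G]
    [MeasurableSpace G] [BorelSpace G]
    (m : Measure G) [m.IsHaarMeasure]
    (Δ : G → ℝ) (hΔcont : Continuous Δ) (hΔpos : ∀ g, 0 < Δ g)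
    (hΔhom : ∀ g h : G, Δ (g * h) = Δ g * Δ h)
    (hΔmod : ∀ g : G, m.map (fun x => x * g) = ENNReal.ofReal ((Δ g)⁻¹) • m)
    (hnonuni : ∃ g : G, Δ g ≠ 1) :
    ∃ ρ : G → ℝ, Continuous ρ ∧ (∀ g, 0 < ρ g) ∧
      (∫ t, ρ t ∂m) = 1 ∧ 1 < ∫ t, ρ t * Δ t ∂m := by
  obtain ⟨f, hfcont, hfpos, hfint⟩ := exists_cont_pos_integrable m
  -- σ : a positive continuous function with both σ and σ·Δ integrable
  set σ : G → ℝ := fun x => f x / (1 + Δ x) with hσ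
  have h1Δ : ∀ x, 0 < 1 + Δ x := fun x => by linarith [hΔpos x]
  have hσcont : Continuous σ :=
    hfcont.div (continuous_const.add hΔcont) (fun x => (h1Δ x).ne')
  have hσpos : ∀ x, 0 < σ x := fun x => div_pos (hfpos x) (h1Δ x)
  have hσle : ∀ x, σ x ≤ f x := fun x => by
    rw [hσ]
    exact div_le_self (hfpos x).le (by linarith [hΔpos x])
  have hσΔle : ∀ x, σ x * Δ x ≤ f x := fun x => by
    rw [hσ, div_mul_eq_mul_div, div_le_iff₀ (h1Δ x)]
    nlinarith [hfpos x, hΔpos x]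
  have hσint : Integrable σ m := by
    refine hfint.mono hσcont.aestronglyMeasurable (Filter.Eventually.of_forall fun x => ?_)
    rw [Real.norm_of_nonneg (hσpos x).le, Real.norm_of_nonneg (hfpos x).le]
    exact hσle x
  have hσΔint : Integrable (fun x => σ x * Δ x) m := by
    refine hfint.mono (hσcont.mul hΔcont).aestronglyMeasurable
      (Filter.Eventually.of_forall fun x => ?_)
    rw [Real.norm_of_nonneg (mul_nonneg (hσpos x).le (hΔpos x).le),
      Real.norm_of_nonneg (hfpos x).le]
    exact hσΔle x
  set c : ℝ := ∫ x, σ x ∂m with hcdef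
  set I : ℝ := ∫ x, σ x * Δ x ∂m with hIdef
  have hmuniv : (0:ENNReal) < m Set.univ := isOpen_univ.measure_pos m Set.univ_nonempty
  have hcpos : 0 < c := by
    rw [hcdef, integral_pos_iff_support_of_nonneg (fun x => (hσpos x).le) hσint]
    have : Function.support σ = Set.univ := Set.eq_univ_of_forall fun x => (hσpos x).ne'
    rwa [this]
  have hIpos : 0 < I := by
    rw [hIdef, integral_pos_iff_support_of_nonneg
      (fun x => mul_nonneg (hσpos x).le (hΔpos x).le) hσΔint]
    have : Function.support (fun x => σ x * Δ x) = Set.univ :=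
      Set.eq_univ_of_forall fun x => (mul_pos (hσpos x) (hΔpos x)).ne'
    rwa [this]
  -- basic facts about Δ
  have hΔ1 : Δ 1 = 1 := by
    have := hΔhom 1 1
    rw [mul_one] at this
    have h := hΔpos 1
    nlinarith
  have hΔinv : ∀ g : G, Δ g⁻¹ = (Δ g)⁻¹ := fun g => by
    have := hΔhom g g⁻¹
    rw [mul_inv_cancel, hΔ1] at this
    exact eq_inv_of_mul_eq_one_right this.symm
  have hΔpow : ∀ (g : G) (n : ℕ), Δ (g ^ n) = (Δ g) ^ n := by
    intro g n
    induction n with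
    | zero => simpa using hΔ1
    | succ k ih => rw [pow_succ, hΔhom, ih, pow_succ]
  -- choose g₁ with Δ g₁ < 1
  obtain ⟨g₀, hg₀⟩ := hnonuni
  obtain ⟨g₁, hg₁⟩ : ∃ g : G, Δ g < 1 := by
    rcases lt_or_gt_of_ne hg₀ with h | h
    · exact ⟨g₀, h⟩
    · refine ⟨g₀⁻¹, ?_⟩
      rw [hΔinv]
      exact inv_lt_one_of_one_lt₀ h
  -- choose n with Δ(g₁^n) < I/c
  have htend : Filter.Tendsto (fun n : ℕ => (Δ g₁) ^ n) Filter.atTop (nhds 0) :=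
    tendsto_pow_atTop_nhds_zero_of_lt_one (hΔpos g₁).le hg₁
  obtain ⟨n, hn⟩ := (htend.eventually (gt_mem_nhds (div_pos hIpos hcpos))).exists
  set h : G := g₁ ^ n with hhdef
  have hΔh : Δ h < I / c := by rw [hhdef, hΔpow]; exact hn
  have hΔhpos : 0 < Δ h := hΔpos h
  -- change of variables lemma
  have hmap : ∀ (φ : G → ℝ), Continuous φ →
      (∫ t, φ (t * h) ∂m) = (Δ h)⁻¹ * ∫ t, φ t ∂m := by
    intro φ hφ
    have := integral_map (μ := m) (φ := fun x : G => x * h) (f := φ)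
      (measurable_mul_const h).aemeasurable
      (hφ.aestronglyMeasurable)
    rw [hΔmod h, integral_smul_measure, ENNReal.toReal_ofReal (by positivity),
      smul_eq_mul] at this
    exact this.symm
  refine ⟨fun t => Δ h * σ (t * h) / c, ?_, ?_, ?_, ?_⟩
  · exact (continuous_const.mul (hσcont.comp (continuous_mul_right h))).div_const c
  · intro t
    exact div_pos (mul_pos hΔhpos (hσpos _)) hcpos
  · have step : (∫ t, Δ h * σ (t * h) / c ∂m) = Δ h / c * ∫ t, σ (t * h) ∂m := by
      rw [← integral_const_mul]
      congr 1
      ext t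
      ring
    rw [step, hmap σ hσcont, ← hcdef]
    field_simp
  · have key : (∫ t, Δ h * σ (t * h) / c * Δ t ∂m) = (Δ h)⁻¹ * I / c := by
      have heq : ∀ t : G, Δ h * σ (t * h) / c * Δ t = (1/c) * (σ (t * h) * Δ (t * h)) := by
        intro t
        have : Δ (t * h) = Δ t * Δ h := hΔhom t h
        rw [this]
        field_simp
      rw [integral_congr_ae (Filter.Eventually.of_forall heq), integral_const_mul,
        hmap (fun x => σ x * Δ x) (hσcont.mul hΔcont), ← hIdef]
      ring
    have heq2 : (Δ h)⁻¹ * I / c = I / c / Δ h := by ring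
    rw [key, heq2]
    exact (one_lt_div hΔhpos).mpr hΔh
end

section
/- Let G be a locally compact second countable group, μ an admissible probability measure on G, X and Y compact metrizable G-spaces, and π : X → Y a continuous surjective G-map. If η is an ergodic μ-stationary probability measure on Y, then any extreme point ν of the compact convex set {ν ∈ Prob_μ(X) : π_*ν = η} is an ergodic μ-stationary measure on X. -/
open MeasureTheory TopologicalSpace
open scoped ENNReal

/-- The support of a measure on a topological space. -/
def measureSupport {G : Type*} [TopologicalSpace G] [MeasurableSpace G] (μ : Measure G) :
    Set G :=
  {x | ∀ U : Set G, IsOpen U → x ∈ U → 0 < μ U}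

/-- Admissibility of a probability measure on a locally compact group. -/
def Admissible {G : Type*} [Group G] [TopologicalSpace G] [IsTopologicalGroup G]
    [LocallyCompactSpace G] [MeasurableSpace G] [BorelSpace G] (μ : Measure G) : Prop :=
  μ ≪ Measure.haar ∧ Subsemigroup.closure (measureSupport μ) = ⊤

/-- A measure `ν` on a `G`-space is `μ`-stationary if `μ * ν = ν`. -/
def IsMuStationary {G X : Type*} [Group G] [MulAction G X] [MeasurableSpace G]
    [MeasurableSpace X] (μ : Measure G) (ν : Measure X) : Prop :=
  (μ.prod ν).map (fun p : G × X => p.1 • p.2) = ν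

/-- A `μ`-stationary probability measure is ergodic iff it is an extreme point of the convex
compact set of `μ`-stationary probability measures. -/
def IsErgodicStationary {G X : Type*} [Group G] [MulAction G X] [MeasurableSpace G]
    [MeasurableSpace X] (μ : Measure G) (ν : Measure X) : Prop :=
  IsMuStationary μ ν ∧ IsProbabilityMeasure ν ∧
    ∀ ν₁ ν₂ : Measure X, IsMuStationary μ ν₁ → IsProbabilityMeasure ν₁ →
      IsMuStationary μ ν₂ → IsProbabilityMeasure ν₂ →
      ∀ t : ℝ≥0∞, 0 < t → t < 1 → ν = t • ν₁ + (1 - t) • ν₂ → ν₁ = ν ∧ ν₂ = ν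

private theorem stationary_map_aux {G X Y : Type*} [Group G]
    [TopologicalSpace G] [SecondCountableTopology G] [MeasurableSpace G] [BorelSpace G]
    [TopologicalSpace X] [SecondCountableTopology X] [MeasurableSpace X] [BorelSpace X]
    [MulAction G X]
    [TopologicalSpace Y] [SecondCountableTopology Y] [MeasurableSpace Y] [BorelSpace Y]
    [MulAction G Y]
    (hX : Continuous fun p : G × X => p.1 • p.2)
    (hY : Continuous fun p : G × Y => p.1 • p.2)
    (μ : Measure G) [IsProbabilityMeasure μ]
    (π : X → Y) (hπcont : Continuous π)
    (hπequiv : ∀ (g : G) (x : X), π (g • x) = g • π x)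
    (ν : Measure X) [IsProbabilityMeasure ν] (hν : IsMuStationary μ ν) :
    IsMuStationary μ (ν.map π) := by
  unfold IsMuStationary at *
  have hπm : Measurable π := hπcont.measurable
  have h1 : μ.prod (ν.map π) = (μ.prod ν).map (Prod.map id π) := by
    rw [← Measure.map_prod_map _ _ measurable_id hπm, Measure.map_id]
  rw [h1, Measure.map_map hY.measurable (measurable_id.prodMap hπm)]
  have : ((fun p : G × Y => p.1 • p.2) ∘ Prod.map id π) = π ∘ (fun p : G × X => p.1 • p.2) := by
    ext p; simp [Prod.map, hπequiv]
  rw [this, ← Measure.map_map hπm hX.measurable, hν]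

/-- If `η` is an ergodic `μ`-stationary probability measure on `Y` and `ν` is an extreme point
of the fiber `{ν ∈ Prob_μ(X) : π₊ν = η}`, then `ν` is an ergodic `μ`-stationary measure. -/
theorem extreme_in_fiber_is_ergodic {G : Type*} [Group G] [TopologicalSpace G]
    [IsTopologicalGroup G] [LocallyCompactSpace G] [SecondCountableTopology G] [T2Space G]
    [MeasurableSpace G] [BorelSpace G]
    {X Y : Type*} [TopologicalSpace X] [CompactSpace X] [MetrizableSpace X]
    [MeasurableSpace X] [BorelSpace X] [MulAction G X]
    [TopologicalSpace Y] [CompactSpace Y] [MetrizableSpace Y]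
    [MeasurableSpace Y] [BorelSpace Y] [MulAction G Y]
    (hX : Continuous fun p : G × X => p.1 • p.2)
    (hY : Continuous fun p : G × Y => p.1 • p.2)
    (μ : Measure G) [IsProbabilityMeasure μ] (hμ : Admissible μ)
    (π : X → Y) (hπcont : Continuous π) (hπsurj : Function.Surjective π)
    (hπequiv : ∀ (g : G) (x : X), π (g • x) = g • π x)
    (η : Measure Y) (hη : IsErgodicStationary μ η)
    (ν : Measure X) (hνstat : IsMuStationary μ ν) (hνprob : IsProbabilityMeasure ν)
    (hνfib : ν.map π = η)
    (hνext : ∀ ν₁ ν₂ : Measure X,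
      IsMuStationary μ ν₁ → IsProbabilityMeasure ν₁ → ν₁.map π = η →
      IsMuStationary μ ν₂ → IsProbabilityMeasure ν₂ → ν₂.map π = η →
      ∀ t : ℝ≥0∞, 0 < t → t < 1 → ν = t • ν₁ + (1 - t) • ν₂ → ν₁ = ν ∧ ν₂ = ν) :
    IsErgodicStationary μ ν := by
  refine ⟨hνstat, hνprob, ?_⟩
  intro ν₁ ν₂ h1s h1p h2s h2p t ht0 ht1 heq
  haveI : SecondCountableTopology X := by
    letI := TopologicalSpace.metrizableSpaceMetric X; infer_instance
  haveI : SecondCountableTopology Y := by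
    letI := TopologicalSpace.metrizableSpaceMetric Y; infer_instance
  have hπm : Measurable π := hπcont.measurable
  obtain ⟨hηs, hηp, hηext⟩ := hη
  haveI h1pm : IsProbabilityMeasure (ν₁.map π) := Measure.isProbabilityMeasure_map hπm.aemeasurable
  haveI h2pm : IsProbabilityMeasure (ν₂.map π) := Measure.isProbabilityMeasure_map hπm.aemeasurable
  have hmapeq : η = t • ν₁.map π + (1 - t) • ν₂.map π := by
    rw [← hνfib, heq, Measure.map_add _ _ hπm, Measure.map_smul, Measure.map_smul]
  have h1sm : IsMuStationary μ (ν₁.map π) := stationary_map_aux hX hY μ π hπcont hπequiv ν₁ h1s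
  have h2sm : IsMuStationary μ (ν₂.map π) := stationary_map_aux hX hY μ π hπcont hπequiv ν₂ h2s
  obtain ⟨hf1, hf2⟩ := hηext (ν₁.map π) (ν₂.map π) h1sm h1pm h2sm h2pm t ht0 ht1 hmapeq
  exact hνext ν₁ ν₂ h1s h1p hf1 h2s h2p hf2 t ht0 ht1 heq
end

section
/- Let Γ = {(m + n√2, m − n√2) : m, n ∈ ℤ} and S = ℝ × [−1, 1], and Λ = Γ ∩ S. Then Λ is not contained in any finite union of translates of a proper linear subspace of ℝ²; equivalently, Λ is Zariski dense in ℝ² (viewed as the ℝ-points of the affine algebraic group 𝔾_a²). -/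
open Set Pointwise

/-- The lattice `Γ = {(m + n√2, m − n√2) : m, n ∈ ℤ} ⊆ ℝ²`. -/
def galoisLattice : Set (ℝ × ℝ) :=
  {p | ∃ m n : ℤ, p = (m + n * Real.sqrt 2, m - n * Real.sqrt 2)}

/-- The horizontal strip `S = ℝ × [−1, 1]`. -/
def horizStrip : Set (ℝ × ℝ) := Set.univ ×ˢ Set.Icc (-1 : ℝ) 1

noncomputable def pt (m : ℕ) : ℝ × ℝ :=
  ((3 + 2 * Real.sqrt 2) ^ m, (3 - 2 * Real.sqrt 2) ^ m)

lemma sqrt2_sq : Real.sqrt 2 * Real.sqrt 2 = 2 := Real.mul_self_sqrt (by norm_num)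

lemma pt_mem_lattice (m : ℕ) : pt m ∈ galoisLattice := by
  suffices h : ∃ a b : ℤ, (3 + 2 * Real.sqrt 2) ^ m = a + b * Real.sqrt 2 ∧
      (3 - 2 * Real.sqrt 2) ^ m = a - b * Real.sqrt 2 by
    obtain ⟨a, b, h1, h2⟩ := h
    exact ⟨a, b, by simp [pt, h1, h2]⟩
  induction m with
  | zero => exact ⟨1, 0, by norm_num⟩
  | succ n ih =>
    obtain ⟨a, b, h1, h2⟩ := ih
    refine ⟨3*a + 4*b, 2*a + 3*b, ?_, ?_⟩
    · rw [pow_succ, h1]; push_cast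
      linear_combination (2*(b:ℝ)) * sqrt2_sq
    · rw [pow_succ, h2]; push_cast
      linear_combination (2*(b:ℝ)) * sqrt2_sq

lemma base_pos : (0:ℝ) < 3 - 2 * Real.sqrt 2 := by
  nlinarith [sqrt2_sq, Real.sqrt_nonneg 2]

lemma base_lt_one : 3 - 2 * Real.sqrt 2 < 1 := by
  nlinarith [sqrt2_sq, Real.sqrt_nonneg 2]

lemma one_lt_base : (1:ℝ) < 3 + 2 * Real.sqrt 2 := by
  nlinarith [sqrt2_sq, Real.sqrt_nonneg 2]

lemma pt_mem_strip (m : ℕ) : pt m ∈ horizStrip := by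
  refine ⟨trivial, ?_, ?_⟩
  · have h0 : (0:ℝ) ≤ (3 - 2 * Real.sqrt 2) ^ m := pow_nonneg base_pos.le m
    show (-1:ℝ) ≤ (3 - 2 * Real.sqrt 2) ^ m
    linarith
  · show (3 - 2 * Real.sqrt 2) ^ m ≤ 1
    exact pow_le_one₀ base_pos.le base_lt_one.le

lemma prod_one (m : ℕ) :
    (3 + 2 * Real.sqrt 2) ^ m * (3 - 2 * Real.sqrt 2) ^ m = 1 := by
  rw [← mul_pow]
  have : (3 + 2 * Real.sqrt 2) * (3 - 2 * Real.sqrt 2) = 1 := by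
    linear_combination (-4:ℝ) * sqrt2_sq
  rw [this, one_pow]

lemma span_top {W : Submodule ℝ (ℝ × ℝ)} {u v : ℝ × ℝ} (hu : u ∈ W) (hv : v ∈ W)
    (hd : u.1 * v.2 - u.2 * v.1 ≠ 0) : W = ⊤ := by
  rw [eq_top_iff]
  rintro z -
  have hz : z = ((z.1 * v.2 - z.2 * v.1) / (u.1 * v.2 - u.2 * v.1)) • u
      + ((u.1 * z.2 - u.2 * z.1) / (u.1 * v.2 - u.2 * v.1)) • v := by
    apply Prod.ext <;> simp only [Prod.smul_fst, Prod.smul_snd, Prod.fst_add, Prod.snd_add,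
      smul_eq_mul] <;> rw [div_mul_eq_mul_div, div_mul_eq_mul_div, ← add_div, eq_div_iff hd] <;> ring
  rw [hz]
  exact W.add_mem (W.smul_mem _ hu) (W.smul_mem _ hv)

/-- `Λ = Γ ∩ S` is not contained in any finite union of translates of a proper linear
subspace of `ℝ²`; i.e. `Λ` is Zariski dense in `ℝ² = 𝔾ₐ²(ℝ)`. -/
theorem cutAndProject_zariskiDense :
    ∀ W : Submodule ℝ (ℝ × ℝ), W ≠ ⊤ →
      ∀ F : Set (ℝ × ℝ), F.Finite →
        ¬ (galoisLattice ∩ horizStrip ⊆ F + (W : Set (ℝ × ℝ))) := by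
  intro W hW F hF hsub
  have H : ∀ m : ℕ, ∃ f : ℝ × ℝ, f ∈ F ∧ pt m - f ∈ W := by
    intro m
    have hm : pt m ∈ F + (W : Set (ℝ × ℝ)) :=
      hsub ⟨pt_mem_lattice m, pt_mem_strip m⟩
    obtain ⟨f, hf, w, hw, hfw⟩ := Set.mem_add.mp hm
    exact ⟨f, hf, by rw [← hfw]; simpa using hw⟩
  choose g hgF hgW using H
  have : Finite F := hF.to_subtype
  have hfib := Finite.exists_infinite_fiber (fun m : ℕ => (⟨g m, hgF m⟩ : F))
  obtain ⟨y, hy⟩ := hfib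
  have hys : ((fun m : ℕ => (⟨g m, hgF m⟩ : F)) ⁻¹' {y}).Infinite :=
    Set.infinite_coe_iff.mp hy
  obtain ⟨i, hi⟩ := hys.nonempty
  obtain ⟨j, hj, hij⟩ := hys.exists_gt i
  obtain ⟨k, hk, hjk⟩ := hys.exists_gt j
  have hgi : g i = (y : ℝ × ℝ) := congrArg Subtype.val hi
  have hgj : g j = (y : ℝ × ℝ) := congrArg Subtype.val hj
  have hgk : g k = (y : ℝ × ℝ) := congrArg Subtype.val hk
  have hu : pt j - pt i ∈ W := by
    have := W.sub_mem (hgW j) (hgW i)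
    rw [hgi, hgj] at this
    simpa using this
  have hv : pt k - pt i ∈ W := by
    have := W.sub_mem (hgW k) (hgW i)
    rw [hgi, hgk] at this
    simpa using this
  -- determinant nonzero
  set A := (3 + 2 * Real.sqrt 2) ^ i with hA
  set B := (3 + 2 * Real.sqrt 2) ^ j with hB
  set C := (3 + 2 * Real.sqrt 2) ^ k with hC
  have hApos : 0 < A := pow_pos (by linarith [one_lt_base]) i
  have hBpos : 0 < B := pow_pos (by linarith [one_lt_base]) j
  have hCpos : 0 < C := pow_pos (by linarith [one_lt_base]) k
  have hAB : A < B := pow_lt_pow_right₀ one_lt_base hij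
  have hBC : B < C := pow_lt_pow_right₀ one_lt_base hjk
  have hsA : (3 - 2 * Real.sqrt 2) ^ i = A⁻¹ :=
    (inv_eq_of_mul_eq_one_right (prod_one i)).symm
  have hsB : (3 - 2 * Real.sqrt 2) ^ j = B⁻¹ :=
    (inv_eq_of_mul_eq_one_right (prod_one j)).symm
  have hsC : (3 - 2 * Real.sqrt 2) ^ k = C⁻¹ :=
    (inv_eq_of_mul_eq_one_right (prod_one k)).symm
  have hd : (pt j - pt i).1 * (pt k - pt i).2 - (pt j - pt i).2 * (pt k - pt i).1 ≠ 0 := by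
    have h1 : (pt j - pt i).1 * (pt k - pt i).2 - (pt j - pt i).2 * (pt k - pt i).1
        = ((B - A) * (C - A) * (C - B)) / (A * B * C) := by
      simp only [pt, Prod.fst_sub, Prod.snd_sub, hsA, hsB, hsC]
      field_simp
      ring
    rw [h1]
    have : 0 < ((B - A) * (C - A) * (C - B)) / (A * B * C) := by
      apply div_pos
      · have := hAB.trans hBC
        apply mul_pos (mul_pos (by linarith) (by linarith)) (by linarith)
      · exact mul_pos (mul_pos hApos hBpos) hCpos
    exact this.ne'
  exact hW (span_top hu hv hd)
end
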